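/- arXiv:2503.18625 — 8 statements merged into one kernel-verified Lean document; each statement's English description precedes it below -/
import Mathlib

section
/- Let M be a nonzero Gaussian integer and x, y complex numbers. If x − y lies in the topological boundary ∂S_M of the square S_M = {M(c+d·i) : −1/2 ≤ c, d < 1/2} ⊆ ℂ, then |d_M(x, y)| = |x − y|. -/
open Complex MeasureTheory

noncomputable section

/-- `z` is a Gaussian integer, i.e. an element of `ℤ[i] ⊆ ℂ`. -/
def IsGaussInt (z : ℂ) : Prop := ∃ a b : ℤ, z = (a : ℂ) + (b : ℂ) * Complex.I

/-- Divisibility within the Gaussian integers. -/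
def GaussDvd (d z : ℂ) : Prop := ∃ q : ℂ, IsGaussInt q ∧ z = d * q

/-- Two Gaussian integers are coprime: every common Gaussian-integer divisor is a unit. -/
def GaussCoprime (x y : ℂ) : Prop :=
  ∀ d : ℂ, IsGaussInt d → GaussDvd d x → GaussDvd d y →
    d = 1 ∨ d = -1 ∨ d = Complex.I ∨ d = -Complex.I

/-- Componentwise floor `⌊z⌋ = ⌊Re z⌋ + ⌊Im z⌋·i`. -/
def cfloor (z : ℂ) : ℂ := (⌊z.re⌋ : ℂ) + (⌊z.im⌋ : ℂ) * Complex.I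

/-- Componentwise rounding `[z] = [Re z] + [Im z]·i`, where `[x]` is the unique
integer with `-1/2 ≤ x - [x] < 1/2`. -/
def cround (z : ℂ) : ℂ := (round z.re : ℂ) + (round z.im : ℂ) * Complex.I

/-- Remainder of `z` modulo `m`: `⟨z⟩_m = z - m·⌊z/m⌋`. -/
def cmod (z m : ℂ) : ℂ := z - m * cfloor (z / m)

/-- Circular distance `d_m(x, y) = x - y - [(x-y)/m]·m`. -/
def cdist (m x y : ℂ) : ℂ := x - y - cround ((x - y) / m) * m

/-- The complex remainder set `F_m = {m(a+b·i) : 0 ≤ a, b < 1}`. -/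
def FM (m : ℂ) : Set ℂ :=
  {z | ∃ a b : ℝ, 0 ≤ a ∧ a < 1 ∧ 0 ≤ b ∧ b < 1 ∧ z = m * ((a : ℂ) + (b : ℂ) * Complex.I)}

/-- The set `S_m = {m(c+d·i) : -1/2 ≤ c, d < 1/2}`. -/
def SM (m : ℂ) : Set ℂ :=
  {z | ∃ c d : ℝ, -(1/2) ≤ c ∧ c < 1/2 ∧ -(1/2) ≤ d ∧ d < 1/2 ∧
    z = m * ((c : ℂ) + (d : ℂ) * Complex.I)}


/-- If `x - y` lies on the topological boundary of `S_M`, then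
`|d_M(x, y)| = |x - y|`. -/
theorem stmt4 (M : ℂ) (hM : IsGaussInt M) (hMne : M ≠ 0) (x y : ℂ)
    (h : x - y ∈ frontier (SM M)) :
    ‖cdist M x y‖ = ‖x - y‖ := by
  set z := x - y with hz
  -- the closed square
  set C : Set ℂ := {w : ℂ | (w / M).re ∈ Set.Icc (-(1/2):ℝ) (1/2) ∧
      (w / M).im ∈ Set.Icc (-(1/2):ℝ) (1/2)} with hCdef
  have hC : IsClosed C := by
    apply IsClosed.inter
    · exact isClosed_Icc.preimage (Complex.continuous_re.comp (continuous_id.div_const M))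
    · exact isClosed_Icc.preimage (Complex.continuous_im.comp (continuous_id.div_const M))
  have hsub : SM M ⊆ C := by
    rintro w ⟨c, d, hc1, hc2, hd1, hd2, rfl⟩
    have hdiv : (M * ((c:ℂ) + (d:ℂ) * Complex.I)) / M = (c:ℂ) + (d:ℂ) * Complex.I := by
      field_simp
    have hre : ((c:ℂ) + (d:ℂ) * Complex.I).re = c := by simp
    have him : ((c:ℂ) + (d:ℂ) * Complex.I).im = d := by simp
    exact ⟨by rw [hdiv, hre]; exact ⟨hc1, hc2.le⟩,
      by rw [hdiv, him]; exact ⟨hd1, hd2.le⟩⟩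
  have hzC : z ∈ C := closure_minimal hsub hC (frontier_subset_closure h)
  set w := z / M with hw
  have hzw : M * w = z := by rw [hw]; field_simp
  have hre : w.re ∈ Set.Icc (-(1/2):ℝ) (1/2) := hzC.1
  have him : w.im ∈ Set.Icc (-(1/2):ℝ) (1/2) := hzC.2
  have hcd : cdist M x y = M * (w - cround w) := by
    rw [cdist, ← hz, ← hw, mul_sub, hzw]; ring
  rw [hcd, ← hzw, norm_mul, norm_mul]
  congr 1
  have key : ∀ c : ℝ, -(1/2) ≤ c → c ≤ 1/2 → (c - round c)^2 = c^2 := by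
    intro c h1 h2
    rcases lt_or_eq_of_le h2 with hlt | heq
    · have h0 : round c = 0 := by
        rw [round_eq]
        rw [Int.floor_eq_zero_iff]
        constructor <;> simp <;> linarith
      simp [h0]
    · subst heq
      have h1r : round ((1:ℝ)/2) = 1 := by rw [round_eq]; norm_num
      rw [h1r]; norm_num
  have hre2 : (w - cround w).re = w.re - round w.re := by simp [cround]
  have him2 : (w - cround w).im = w.im - round w.im := by simp [cround]
  rw [Complex.norm_def, Complex.norm_def]
  congr 1
  rw [Complex.normSq_apply, Complex.normSq_apply, hre2, him2]
  have e1 := key w.re hre.1 hre.2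
  have e2 := key w.im him.1 him.2
  nlinarith [e1, e2]
end
end

section
/- Let k be a nonzero integer, M a Gaussian integer with |M| ≥ √2, and x, y complex numbers. Then |d_{kM}(d_k(x, y), 0)| = |d_k(x, y)|. -/
open Complex MeasureTheory

noncomputable section

lemma round_eq_one_of_half : round ((1:ℝ)/2) = 1 := by
  rw [round_eq]; norm_num

lemma key (v : ℂ) (h : ‖v‖ ≤ 1/2) :
    ‖v - cround v‖ = ‖v‖ := by
  have hre := (Complex.abs_re_le_norm v).trans h
  have him := (Complex.abs_im_le_norm v).trans h
  rw [abs_le] at hre him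
  have hsq : v.re ^ 2 + v.im ^ 2 ≤ 1/4 := by
    have := Complex.sq_norm v
    rw [Complex.normSq_apply] at this
    nlinarith [norm_nonneg v]
  rcases lt_or_eq_of_le hre.2 with h1 | h1
  · rcases lt_or_eq_of_le him.2 with h2 | h2
    · have : cround v = 0 := by
        unfold cround
        have r1 : round v.re = 0 := by
          rw [round_eq, Int.floor_eq_zero_iff]
          constructor <;> [linarith [hre.1]; linarith]
        have r2 : round v.im = 0 := by
          rw [round_eq, Int.floor_eq_zero_iff]
          constructor <;> [linarith [him.1]; linarith]
        simp [r1, r2]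
      rw [this, sub_zero]
    · have hre0 : v.re = 0 := by nlinarith
      have hv : v = Complex.I / 2 := by
        apply Complex.ext <;> simp [hre0, h2]
      have hcr : cround v = Complex.I := by
        unfold cround
        rw [hre0, h2]
        simp [round_eq_one_of_half]
      rw [hcr, hv]
      have : Complex.I / 2 - Complex.I = -(Complex.I/2) := by ring
      rw [this, norm_neg]
  · have him0 : v.im = 0 := by nlinarith
    have hv : v = 1 / 2 := by
      apply Complex.ext <;> simp [him0, h1]
    have hcr : cround v = 1 := by
      unfold cround
      rw [him0, h1]
      simp [round_eq_one_of_half]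
    rw [hcr, hv]
    have : (1:ℂ) / 2 - 1 = -(1/2) := by ring
    rw [this, norm_neg]

/-- For a nonzero integer `k` and a Gaussian integer `M` with `|M| ≥ √2`,
`|d_{kM}(d_k(x,y), 0)| = |d_k(x,y)|`. -/
theorem stmt5 (k : ℤ) (hk : k ≠ 0) (M : ℂ) (hM : IsGaussInt M)
    (habs : Real.sqrt 2 ≤ ‖M‖) (x y : ℂ) :
    ‖cdist ((k : ℂ) * M) (cdist (k : ℂ) x y) 0‖ =
      ‖cdist (k : ℂ) x y‖ := by
  have hs2 : (0:ℝ) < Real.sqrt 2 := by positivity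
  have hMpos : 0 < ‖M‖ := lt_of_lt_of_le hs2 habs
  have hM0 : M ≠ 0 := by
    intro h; rw [h, norm_zero] at habs; linarith
  have hk0 : (k:ℂ) ≠ 0 := Int.cast_ne_zero.mpr hk
  set u := (x - y) / (k:ℂ) with hu
  set r := u - cround u with hr
  have hreq : cdist (k:ℂ) x y = (k:ℂ) * r := by
    unfold cdist
    rw [hr, hu]
    field_simp
  have hrre : |r.re| ≤ 1/2 := by
    have : r.re = u.re - (round u.re : ℝ) := by simp [hr, cround]
    rw [this]
    exact abs_sub_round u.re
  have hrim : |r.im| ≤ 1/2 := by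
    have : r.im = u.im - (round u.im : ℝ) := by simp [hr, cround]
    rw [this]
    exact abs_sub_round u.im
  have hrsq : ‖r‖ ^ 2 ≤ 1/2 := by
    rw [Complex.sq_norm, Complex.normSq_apply]
    rw [abs_le] at hrre hrim
    nlinarith
  have hMsq : 2 ≤ ‖M‖ ^ 2 := by
    nlinarith [Real.sq_sqrt (by norm_num : (0:ℝ) ≤ 2)]
  have hv : ‖r / M‖ ≤ 1/2 := by
    rw [norm_div, div_le_iff₀ hMpos]
    nlinarith [norm_nonneg r]
  rw [hreq]
  unfold cdist
  rw [sub_zero, mul_div_mul_left r M hk0]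
  have e2 : (k:ℂ)*r - cround (r/M) * ((k:ℂ)*M) = ((k:ℂ)*M) * (r/M - cround (r/M)) := by
    field_simp
  rw [e2, norm_mul, key _ hv, ← norm_mul]
  congr 1
  field_simp
end
end

section
/- (C-CRT) Let Γ₁, Γ₂, …, Γ_L be pairwise coprime Gaussian integers with |Γ_i| ≥ √2 for each i, let Γ = Γ₁Γ₂⋯Γ_L, γ_i = Γ/Γ_i, and let γ̄_i, Γ̄_i ∈ ℤ[i] satisfy γ_i·γ̄_i + Γ_i·Γ̄_i = 1 for each i. If N ∈ F_Γ is a complex number with remainders r_i = ⟨N⟩_{Γ_i} for i = 1, …, L, then N = ⟨ r₁ − ⌊r₁⌋ + Σ_{i=1}^{L} γ̄_i·γ_i·⌊r_i⌋ ⟩_Γ. -/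
open Complex MeasureTheory

noncomputable section

open GaussianInt

lemma exists_gauss {z : ℂ} (h : IsGaussInt z) : ∃ g : GaussianInt, (g : ℂ) = z := by
  obtain ⟨a, b, rfl⟩ := h
  exact ⟨⟨a, b⟩, GaussianInt.toComplex_def' a b⟩

lemma isGaussInt_coe (g : GaussianInt) : IsGaussInt (g : ℂ) :=
  ⟨g.re, g.im, GaussianInt.toComplex_def g⟩

def gfloor (z : ℂ) : GaussianInt := ⟨⌊z.re⌋, ⌊z.im⌋⟩

lemma gfloor_coe (z : ℂ) : ((gfloor z : GaussianInt) : ℂ) = cfloor z := by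
  simp [gfloor, cfloor, GaussianInt.toComplex_def']

lemma coe_re' (g : GaussianInt) : (g : ℂ).re = (g.re : ℝ) := by rw [GaussianInt.toComplex_def]; simp
lemma coe_im' (g : GaussianInt) : (g : ℂ).im = (g.im : ℝ) := by rw [GaussianInt.toComplex_def]; simp

lemma cfloor_sub_gauss (z : ℂ) (g : GaussianInt) :
    cfloor (z - (g : ℂ)) = cfloor z - (g : ℂ) := by
  unfold cfloor
  rw [Complex.sub_re, Complex.sub_im, coe_re', coe_im', Int.floor_sub_intCast, Int.floor_sub_intCast,
    GaussianInt.toComplex_def]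
  push_cast
  ring

lemma cfloor_add_gauss (z : ℂ) (g : GaussianInt) :
    cfloor (z + (g : ℂ)) = cfloor z + (g : ℂ) := by
  have := cfloor_sub_gauss (z + (g : ℂ)) g
  simp at this
  rw [this]; ring


/-- C-CRT reconstruction formula. -/
theorem stmt7 (L : ℕ) (hL : 0 < L) (Γ : Fin L → ℂ)
    (hGauss : ∀ i, IsGaussInt (Γ i))
    (habs : ∀ i, Real.sqrt 2 ≤ ‖Γ i‖)
    (hcop : ∀ i j, i ≠ j → GaussCoprime (Γ i) (Γ j))
    (γ γbar Γbar : Fin L → ℂ)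
    (hγ : ∀ i, γ i = (∏ j, Γ j) / Γ i)
    (hγbar : ∀ i, IsGaussInt (γbar i)) (hΓbar : ∀ i, IsGaussInt (Γbar i))
    (hBezout : ∀ i, γ i * γbar i + Γ i * Γbar i = 1)
    (N : ℂ) (hN : N ∈ FM (∏ i, Γ i))
    (r : Fin L → ℂ) (hr : ∀ i, r i = cmod N (Γ i)) :
    N = cmod (r ⟨0, hL⟩ - cfloor (r ⟨0, hL⟩) + ∑ i, γbar i * γ i * cfloor (r i))
          (∏ i, Γ i) := by
  classical
  have hΓne : ∀ i, Γ i ≠ 0 := by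
    intro i h
    have := habs i
    rw [h, norm_zero] at this
    exact absurd this (not_le.2 (Real.sqrt_pos.2 two_pos))
  choose G hG using fun i => exists_gauss (hGauss i)
  choose gb hgb using fun i => exists_gauss (hγbar i)
  choose Gb hGb using fun i => exists_gauss (hΓbar i)
  set gsm : Fin L → GaussianInt := fun i => ∏ j ∈ Finset.univ.erase i, G j with hgsmdef
  have hprodG : ((∏ j, G j : GaussianInt) : ℂ) = ∏ j, Γ j := by
    rw [map_prod]
    exact Finset.prod_congr rfl fun j _ => hG j
  have hgsm : ∀ i, ((gsm i : GaussianInt) : ℂ) = γ i := by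
    intro i
    have hmul : Γ i * ((gsm i : GaussianInt) : ℂ) = ∏ j, Γ j := by
      calc Γ i * ((gsm i : GaussianInt) : ℂ) = ((G i * gsm i : GaussianInt) : ℂ) := by
            rw [toComplex_mul, hG]
        _ = ((∏ j, G j : GaussianInt) : ℂ) := by
            rw [Finset.mul_prod_erase Finset.univ G (Finset.mem_univ i)]
        _ = ∏ j, Γ j := hprodG
    rw [hγ i, ← hmul, mul_div_cancel_left₀ _ (hΓne i)]
  have hBz : ∀ i, gsm i * gb i + G i * Gb i = 1 := by
    intro i
    apply toComplex_inj.mp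
    rw [toComplex_add, toComplex_mul, toComplex_mul, hgsm, hgb, hG, hGb, toComplex_one]
    exact hBezout i
  have hri : ∀ i, r i = N - ((G i * gfloor (N / Γ i) : GaussianInt) : ℂ) := by
    intro i
    rw [hr i]
    unfold cmod
    rw [toComplex_mul, hG, gfloor_coe]
  have hfi : ∀ i, gfloor (r i) = gfloor N - G i * gfloor (N / Γ i) := by
    intro i
    apply toComplex_inj.mp
    rw [toComplex_sub, gfloor_coe, gfloor_coe, hri i, cfloor_sub_gauss]
  -- pairwise coprimality in GaussianInt
  have hcp : Pairwise (Function.onFun IsCoprime G) := by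
    intro i j hij
    rw [Function.onFun, ← EuclideanDomain.gcd_isUnit_iff]
    set d := EuclideanDomain.gcd (G i) (G j) with hd
    obtain ⟨qi, hqi⟩ := EuclideanDomain.gcd_dvd_left (G i) (G j)
    obtain ⟨qj, hqj⟩ := EuclideanDomain.gcd_dvd_right (G i) (G j)
    have h1 : GaussDvd (d : ℂ) (Γ i) :=
      ⟨(qi : ℂ), isGaussInt_coe _, by rw [← hG i, hqi, toComplex_mul]⟩
    have h2 : GaussDvd (d : ℂ) (Γ j) :=
      ⟨(qj : ℂ), isGaussInt_coe _, by rw [← hG j, hqj, toComplex_mul]⟩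
    rcases hcop i j hij (d : ℂ) (isGaussInt_coe d) h1 h2 with h | h | h | h
    · have : d = 1 := toComplex_inj.mp (by rw [h, toComplex_one])
      rw [this]; exact isUnit_one
    · have : d = -1 := toComplex_inj.mp (by rw [h, toComplex_neg, toComplex_one])
      rw [this]; exact isUnit_one.neg
    · have : d = ⟨0, 1⟩ := toComplex_inj.mp (by rw [h, toComplex_def']; simp)
      rw [this]
      exact IsUnit.of_mul_eq_one (⟨0, -1⟩ : GaussianInt) (by decide)
    · have : d = ⟨0, -1⟩ := toComplex_inj.mp (by rw [h, toComplex_def']; simp)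
      rw [this]
      exact IsUnit.of_mul_eq_one (⟨0, 1⟩ : GaussianInt) (by decide)
  -- each G j divides the key Gaussian integer
  have hdvd : ∀ j, G j ∣ (∑ i, gb i * gsm i * gfloor (r i)) - gfloor N := by
    intro j
    have hsplit : (∑ i, gb i * gsm i * gfloor (r i))
        = gb j * gsm j * gfloor (r j) + ∑ i ∈ Finset.univ.erase j, gb i * gsm i * gfloor (r i) :=
      (Finset.add_sum_erase _ _ (Finset.mem_univ j)).symm
    have h1 : G j ∣ ∑ i ∈ Finset.univ.erase j, gb i * gsm i * gfloor (r i) := by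
      refine Finset.dvd_sum fun i hi => ?_
      have hji : j ∈ Finset.univ.erase i := by
        rw [Finset.mem_erase] at hi ⊢
        exact ⟨(hi.1).symm, Finset.mem_univ _⟩
      exact ((Finset.dvd_prod_of_mem G hji).mul_left (gb i)).mul_right (gfloor (r i))
    have h2 : gb j * gsm j * gfloor (r j) - gfloor N
        = G j * (-(gfloor (N / Γ j) + Gb j * gfloor (r j))) := by
      have hb : gb j * gsm j = 1 - G j * Gb j := by linear_combination hBz j
      rw [hb, hfi j]; ring
    have h3 : (∑ i, gb i * gsm i * gfloor (r i)) - gfloor N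
        = (gb j * gsm j * gfloor (r j) - gfloor N)
          + ∑ i ∈ Finset.univ.erase j, gb i * gsm i * gfloor (r i) := by
      rw [hsplit]; ring
    rw [h3]
    exact dvd_add (h2 ▸ Dvd.intro _ rfl) h1
  obtain ⟨q, hq⟩ := Fintype.prod_dvd_of_coprime hcp hdvd
  set P : ℂ := ∏ i, Γ i with hPdef
  have hPne : P ≠ 0 := Finset.prod_ne_zero_iff.mpr fun i _ => hΓne i
  have hsum : (∑ i, γbar i * γ i * cfloor (r i))
      = ((∑ i, gb i * gsm i * gfloor (r i) : GaussianInt) : ℂ) := by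
    rw [map_sum]
    refine Finset.sum_congr rfl fun i _ => ?_
    rw [toComplex_mul, toComplex_mul, hgb, hgsm, gfloor_coe]
  set i0 : Fin L := ⟨0, hL⟩
  have hr0 : r i0 - cfloor (r i0) = N - cfloor N := by
    rw [hri i0, cfloor_sub_gauss]; ring
  have hX : r i0 - cfloor (r i0) + ∑ i, γbar i * γ i * cfloor (r i) = N + P * (q : ℂ) := by
    have hqc : ((∑ i, gb i * gsm i * gfloor (r i) : GaussianInt) : ℂ)
        = cfloor N + P * (q : ℂ) := by
      have : (∑ i, gb i * gsm i * gfloor (r i) : GaussianInt) = gfloor N + (∏ i, G i) * q :=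
        by linear_combination hq
      rw [this, toComplex_add, toComplex_mul, gfloor_coe, hprodG]
    rw [hr0, hsum, hqc]; ring
  rw [hX]
  unfold cmod
  have hdiv : (N + P * (q : ℂ)) / P = N / P + (q : ℂ) := by field_simp
  have hfl0 : cfloor (N / P) = 0 := by
    obtain ⟨a, b, ha0, ha1, hb0, hb1, hNval⟩ := hN
    have hNP : N / P = (a : ℂ) + (b : ℂ) * Complex.I := by
      rw [hNval, hPdef]; field_simp; exact mul_div_cancel_left₀ _ (Finset.prod_ne_zero_iff.mpr fun i _ => hΓne i)
    rw [hNP]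
    unfold cfloor
    have hre : ((a : ℂ) + (b : ℂ) * Complex.I).re = a := by simp
    have him : ((a : ℂ) + (b : ℂ) * Complex.I).im = b := by simp
    rw [hre, him, Int.floor_eq_zero_iff.mpr ⟨ha0, ha1⟩, Int.floor_eq_zero_iff.mpr ⟨hb0, hb1⟩]
    simp
  rw [hdiv, cfloor_add_gauss, hfl0, zero_add]
  ring
end
end

section
/- Let M = ρe^{iθ} be a nonzero Gaussian integer (ρ = |M| > 0) and N a complex number, and consider the function r ↦ d_M(r, N) on F_M. Define D := { r = x + y·i : y·sin θ + x·cos θ = ε·ρ/2 + Re(⟨N·e^{−iθ}⟩_ρ) or y·cos θ − x·sin θ = ε·ρ/2 + Im(⟨N·e^{−iθ}⟩_ρ) for some ε ∈ {+1, −1} }. Then every point of F_M at which r ↦ d_M(r, N) is discontinuous belongs to D, and D has two-dimensional Lebesgue measure zero. -/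
open Complex MeasureTheory

noncomputable section

lemma line_null (a b c : ℝ) (hab : a^2 + b^2 ≠ 0) :
    volume {z : ℂ | a * z.re + b * z.im = c} = 0 := by
  set L : ℂ →ₗ[ℝ] ℝ := a • Complex.reLm + b • Complex.imLm with hL
  have hLapp : ∀ z : ℂ, L z = a * z.re + b * z.im := by
    intro z; simp [hL, Complex.reLm, Complex.imLm]
  have hker : LinearMap.ker L ≠ ⊤ := by
    rw [Ne, LinearMap.ker_eq_top]
    intro h
    have := hLapp (Complex.mk a b)
    rw [h] at this
    simp at this
    exact hab (by simpa [pow_two] using this.symm)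
  set z0 : ℂ := Complex.mk (c*a/(a^2+b^2)) (c*b/(a^2+b^2)) with hz0
  have hLz0 : L z0 = c := by
    rw [hz0, hLapp]
    show a * (c*a/(a^2+b^2)) + b * (c*b/(a^2+b^2)) = c
    field_simp
  have hset : {z : ℂ | a * z.re + b * z.im = c} =
      (fun z => z + (-z0)) ⁻¹' (LinearMap.ker L : Set ℂ) := by
    ext z
    simp only [Set.mem_setOf_eq, Set.mem_preimage, SetLike.mem_coe, LinearMap.mem_ker, map_add,
      map_neg, hLapp z, hLz0]
    constructor <;> intro h <;> linarith
  rw [hset, measure_preimage_add_right]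
  exact Measure.addHaar_submodule volume _ hker

lemma round_continuousAt {x : ℝ} (h : ∀ k : ℤ, x ≠ k + 1/2) :
    ContinuousAt (fun y : ℝ => (round y : ℝ)) x := by
  have hne : ((⌊x + 1/2⌋ : ℝ)) ≠ x + 1/2 := by
    intro he
    exact h (⌊x + 1/2⌋ - 1) (by push_cast; linarith)
  have h1 : ((⌊x + 1/2⌋ : ℝ)) < x + 1/2 := lt_of_le_of_ne (Int.floor_le _) hne
  have h2 : x + 1/2 < ⌊x + 1/2⌋ + 1 := Int.lt_floor_add_one _
  have heq : (fun y : ℝ => (round y : ℝ)) =ᶠ[nhds x] fun _ => ((⌊x + 1/2⌋ : ℤ) : ℝ) := by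
    filter_upwards [Ioo_mem_nhds (a := (⌊x + 1/2⌋ : ℝ) - 1/2)
      (b := (⌊x + 1/2⌋ : ℝ) + 1/2) (by linarith) (by linarith)] with y hy
    obtain ⟨hy1, hy2⟩ := hy
    rw [round_eq]
    congr 1
    rw [Int.floor_eq_iff]
    refine ⟨by push_cast; linarith, by push_cast; linarith⟩
  exact continuousAt_const.congr heq.symm


/-- Discontinuity points of `r ↦ d_M(r, N)` on `F_M` lie in the set `D`,
which has Lebesgue measure zero. -/
theorem stmt9 (M : ℂ) (hM : IsGaussInt M) (hMne : M ≠ 0) (N : ℂ)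
    (ρ θ : ℝ) (hρ : ρ = ‖M‖) (hθ : θ = Complex.arg M)
    (D : Set ℂ)
    (hD : D = {r : ℂ | ∃ ε : ℝ, (ε = 1 ∨ ε = -1) ∧
      (r.im * Real.sin θ + r.re * Real.cos θ =
          ε * ρ / 2 + (cmod (N * Complex.exp (-(θ : ℂ) * Complex.I)) (ρ : ℂ)).re ∨
       r.im * Real.cos θ - r.re * Real.sin θ =
          ε * ρ / 2 + (cmod (N * Complex.exp (-(θ : ℂ) * Complex.I)) (ρ : ℂ)).im)}) :
    (∀ r ∈ FM M, ¬ ContinuousWithinAt (fun z => cdist M z N) (FM M) r → r ∈ D) ∧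
    volume D = 0 := by

  have hρpos : 0 < ρ := by rw [hρ]; exact norm_pos_iff.mpr hMne
  have hρne : ρ ≠ 0 := ne_of_gt hρpos
  set E : ℂ := Complex.exp ((θ : ℂ) * Complex.I) with hE
  have hME : M = (ρ : ℂ) * E := by
    rw [hE, hρ, hθ]; exact (Complex.norm_mul_exp_arg_mul_I M).symm
  have hEne : E ≠ 0 := Complex.exp_ne_zero _
  have hEinv : E⁻¹ = Complex.exp (-(θ : ℂ) * Complex.I) := by
    rw [hE, ← Complex.exp_neg]; ring_nf
  have hEinv_re : (E⁻¹).re = Real.cos θ := by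
    rw [hEinv, show -(θ:ℂ) * Complex.I = ((-θ : ℝ) : ℂ) * Complex.I by push_cast; ring,
      Complex.exp_ofReal_mul_I_re, Real.cos_neg]
  have hEinv_im : (E⁻¹).im = -Real.sin θ := by
    rw [hEinv, show -(θ:ℂ) * Complex.I = ((-θ : ℝ) : ℂ) * Complex.I by push_cast; ring,
      Complex.exp_ofReal_mul_I_im, Real.sin_neg]
  set W : ℂ := N * Complex.exp (-(θ : ℂ) * Complex.I) with hW
  have hWE : W = N * E⁻¹ := by rw [hW, hEinv]
  have hre : ∀ z : ℂ, (z * E⁻¹).re = z.re * Real.cos θ + z.im * Real.sin θ := by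
    intro z; rw [Complex.mul_re, hEinv_re, hEinv_im]; ring
  have him : ∀ z : ℂ, (z * E⁻¹).im = z.im * Real.cos θ - z.re * Real.sin θ := by
    intro z; rw [Complex.mul_im, hEinv_re, hEinv_im]; ring
  have hdivM : ∀ z : ℂ, z / M = (z * E⁻¹) / (ρ : ℂ) := by
    intro z; rw [hME]; field_simp
  have hcmod_re : (cmod W (ρ : ℂ)).re = W.re - ρ * ⌊W.re / ρ⌋ := by
    simp [cmod, cfloor, Complex.div_ofReal_re, Complex.div_ofReal_im]
  have hcmod_im : (cmod W (ρ : ℂ)).im = W.im - ρ * ⌊W.im / ρ⌋ := by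
    simp [cmod, cfloor, Complex.div_ofReal_re, Complex.div_ofReal_im]
  constructor
  · intro r hr
    rw [← not_imp_not, not_not]
    intro hrD
    obtain ⟨a, b, ha0, ha1, hb0, hb1, hreq⟩ := hr
    have hrE : r * E⁻¹ = (ρ : ℂ) * ((a : ℂ) + (b : ℂ) * Complex.I) := by
      rw [hreq, hME]; field_simp
    have hrEre : (r * E⁻¹).re = ρ * a := by rw [hrE]; simp
    have hrEim : (r * E⁻¹).im = ρ * b := by rw [hrE]; simp
    have hsub_re : ((r - N) / M).re = a - W.re / ρ := by
      rw [hdivM, Complex.div_ofReal_re, sub_mul, Complex.sub_re, hrEre, ← hWE]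
      field_simp
    have hsub_im : ((r - N) / M).im = b - W.im / ρ := by
      rw [hdivM, Complex.div_ofReal_im, sub_mul, Complex.sub_im, hrEim, ← hWE]
      field_simp
    have key_re : ∀ k : ℤ, ((r - N) / M).re ≠ (k : ℝ) + 1/2 := by
      intro k hk
      rw [hsub_re] at hk
      have hm1 : ((⌊W.re / ρ⌋ : ℤ) : ℝ) ≤ W.re / ρ := Int.floor_le _
      have hm2 : W.re / ρ < (⌊W.re / ρ⌋ : ℤ) + 1 := Int.lt_floor_add_one _
      set m : ℤ := ⌊W.re / ρ⌋ with hm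
      have hjA : k + m < 1 := by
        have : ((k + m : ℤ) : ℝ) < 1 := by push_cast; linarith
        exact_mod_cast this
      have hjB : (-2 : ℤ) < k + m := by
        have : (-2 : ℝ) < ((k + m : ℤ) : ℝ) := by push_cast; linarith
        exact_mod_cast this
      have hjr : (k : ℝ) + (m : ℝ) = 0 ∨ (k : ℝ) + (m : ℝ) = -1 := by
        rcases (by omega : k + m = 0 ∨ k + m = -1) with h | h <;> [left; right] <;>
          exact_mod_cast h
      apply hrD
      rw [hD]
      refine ⟨2 * ((k : ℝ) + (m : ℝ)) + 1,
        by rcases hjr with h | h <;> [left; right] <;> rw [h] <;> norm_num, Or.inl ?_⟩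
      have hLHS : r.im * Real.sin θ + r.re * Real.cos θ = ρ * a := by
        rw [← hrEre, hre r]; ring
      rw [hLHS, hcmod_re]
      have hρa : ρ * a = ρ * (k : ℝ) + ρ / 2 + W.re := by
        have h3 : a = (k : ℝ) + 1/2 + W.re / ρ := by linarith
        rw [h3]; field_simp
      rw [hρa]; ring
    have key_im : ∀ k : ℤ, ((r - N) / M).im ≠ (k : ℝ) + 1/2 := by
      intro k hk
      rw [hsub_im] at hk
      have hm1 : ((⌊W.im / ρ⌋ : ℤ) : ℝ) ≤ W.im / ρ := Int.floor_le _
      have hm2 : W.im / ρ < (⌊W.im / ρ⌋ : ℤ) + 1 := Int.lt_floor_add_one _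
      set m : ℤ := ⌊W.im / ρ⌋ with hm
      have hjA : k + m < 1 := by
        have : ((k + m : ℤ) : ℝ) < 1 := by push_cast; linarith
        exact_mod_cast this
      have hjB : (-2 : ℤ) < k + m := by
        have : (-2 : ℝ) < ((k + m : ℤ) : ℝ) := by push_cast; linarith
        exact_mod_cast this
      have hjr : (k : ℝ) + (m : ℝ) = 0 ∨ (k : ℝ) + (m : ℝ) = -1 := by
        rcases (by omega : k + m = 0 ∨ k + m = -1) with h | h <;> [left; right] <;>
          exact_mod_cast h
      apply hrD
      rw [hD]
      refine ⟨2 * ((k : ℝ) + (m : ℝ)) + 1,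
        by rcases hjr with h | h <;> [left; right] <;> rw [h] <;> norm_num, Or.inr ?_⟩
      have hLHS : r.im * Real.cos θ - r.re * Real.sin θ = ρ * b := by
        rw [← hrEim, him r]
      rw [hLHS, hcmod_im]
      have hρb : ρ * b = ρ * (k : ℝ) + ρ / 2 + W.im := by
        have h3 : b = (k : ℝ) + 1/2 + W.im / ρ := by linarith
        rw [h3]; field_simp
      rw [hρb]; ring
    -- continuity
    have hinner : Continuous (fun z : ℂ => (z - N) / M) :=
      (continuous_id.sub continuous_const).div_const M
    have hc1 : ContinuousAt (fun y : ℝ => (round y : ℝ)) (((r - N) / M).re) :=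
      round_continuousAt key_re
    have hc2 : ContinuousAt (fun y : ℝ => (round y : ℝ)) (((r - N) / M).im) :=
      round_continuousAt key_im
    have hcround : ContinuousAt (fun z : ℂ => cround ((z - N) / M)) r := by
      have hfun : (fun z : ℂ => cround ((z - N) / M)) =
          fun z => (((round (((z - N) / M).re) : ℝ) : ℂ)) +
            (((round (((z - N) / M).im) : ℝ) : ℂ)) * Complex.I := by
        funext z; rw [cround]; push_cast; ring
      rw [hfun]
      have hz1 : ContinuousAt (fun z : ℂ => ((z - N) / M).re) r :=
        (Complex.continuous_re.comp hinner).continuousAt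
      have hz2 : ContinuousAt (fun z : ℂ => ((z - N) / M).im) r :=
        (Complex.continuous_im.comp hinner).continuousAt
      have h1' : ContinuousAt (fun z : ℂ => (round (((z - N) / M).re) : ℝ)) r :=
        Filter.Tendsto.comp (g := fun y : ℝ => ((round y : ℤ) : ℝ))
          (f := fun z : ℂ => ((z - N) / M).re) hc1 hz1
      have h2' : ContinuousAt (fun z : ℂ => (round (((z - N) / M).im) : ℝ)) r :=
        Filter.Tendsto.comp (g := fun y : ℝ => ((round y : ℤ) : ℝ))
          (f := fun z : ℂ => ((z - N) / M).im) hc2 hz2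
      exact ((Complex.continuous_ofReal.continuousAt.comp h1').add
        ((Complex.continuous_ofReal.continuousAt.comp h2').mul continuousAt_const))
    have : ContinuousAt (fun z => cdist M z N) r := by
      unfold cdist
      exact (continuousAt_id.sub continuousAt_const).sub (hcround.mul continuousAt_const)
    exact this.continuousWithinAt
  · rw [hD]
    have h1 : Real.cos θ ^ 2 + Real.sin θ ^ 2 ≠ 0 := by
      rw [Real.cos_sq_add_sin_sq]; norm_num
    have h2 : (-Real.sin θ) ^ 2 + Real.cos θ ^ 2 ≠ 0 := by
      rw [neg_sq, Real.sin_sq_add_cos_sq]; norm_num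
    set c1 : ℝ := (cmod W (ρ : ℂ)).re with hc1'
    set c2 : ℝ := (cmod W (ρ : ℂ)).im with hc2'
    apply measure_mono_null
      (t := {z : ℂ | Real.cos θ * z.re + Real.sin θ * z.im = ρ / 2 + c1} ∪
        ({z : ℂ | Real.cos θ * z.re + Real.sin θ * z.im = -1 * ρ / 2 + c1} ∪
        ({z : ℂ | -Real.sin θ * z.re + Real.cos θ * z.im = ρ / 2 + c2} ∪
         {z : ℂ | -Real.sin θ * z.re + Real.cos θ * z.im = -1 * ρ / 2 + c2})))
    · rintro z ⟨ε, hε, h | h⟩ <;> rcases hε with rfl | rfl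
      · exact Or.inl (by simp only [Set.mem_setOf_eq]; linarith)
      · exact Or.inr (Or.inl (by simp only [Set.mem_setOf_eq]; linarith))
      · exact Or.inr (Or.inr (Or.inl (by simp only [Set.mem_setOf_eq]; linarith)))
      · exact Or.inr (Or.inr (Or.inr (by simp only [Set.mem_setOf_eq]; linarith)))
    · refine measure_union_null (line_null _ _ _ h1) (measure_union_null (line_null _ _ _ h1)
        (measure_union_null (line_null _ _ _ h2) (line_null _ _ _ h2)))
end
end

section
/- Let M be a nonzero Gaussian integer, N a complex number, and σ > 0. Then the integral over F_M of exp(−|d_M(r, N)|²/(2σ²)) with respect to two-dimensional Lebesgue measure equals the integral over S_M of exp(−(u² + v²)/(2σ²)) du dv, i.e., ∬_{F_M} exp(−|d_M(r, N)|²/(2σ²)) dA(r) = ∬_{S_M} exp(−|w|²/(2σ²)) dA(w). -/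
open Complex MeasureTheory Pointwise

noncomputable section

/-- `cdist` is periodic modulo the lattice `M·ℤ[i]` in its middle argument. -/
lemma cdist_period (M N x : ℂ) (hM : M ≠ 0) (p q : ℤ) :
    cdist M (x + M * ((p : ℂ) + (q : ℂ) * Complex.I)) N = cdist M x N := by
  have h1 : (x + M * ((p : ℂ) + (q : ℂ) * Complex.I) - N) / M
      = (x - N) / M + ((p : ℂ) + (q : ℂ) * Complex.I) := by
    field_simp
    ring
  have hre : ((x - N) / M + ((p : ℂ) + (q : ℂ) * Complex.I)).re
      = ((x - N) / M).re + (p : ℝ) := by simp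
  have him : ((x - N) / M + ((p : ℂ) + (q : ℂ) * Complex.I)).im
      = ((x - N) / M).im + (q : ℝ) := by simp
  have h2 : cround ((x - N) / M + ((p : ℂ) + (q : ℂ) * Complex.I))
      = cround ((x - N) / M) + ((p : ℂ) + (q : ℂ) * Complex.I) := by
    unfold cround
    rw [hre, him, round_add_intCast, round_add_intCast]
    push_cast
    ring
  unfold cdist
  rw [h1, h2]
  ring

/-- On `S_M + N`, the circular distance to `N` is the displacement itself. -/
lemma cdist_of_small (M N : ℂ) (hM : M ≠ 0) (c d : ℝ)
    (hc0 : -(1/2) ≤ c) (hc1 : c < 1/2) (hd0 : -(1/2) ≤ d) (hd1 : d < 1/2) :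
    cdist M (N + M * ((c : ℂ) + (d : ℂ) * Complex.I)) N
      = M * ((c : ℂ) + (d : ℂ) * Complex.I) := by
  have harg : (N + M * ((c : ℂ) + (d : ℂ) * Complex.I) - N) / M
      = (c : ℂ) + (d : ℂ) * Complex.I := by
    field_simp
    ring
  have hc : round c = 0 := round_eq_zero_iff.2 ⟨hc0, hc1⟩
  have hd : round d = 0 := round_eq_zero_iff.2 ⟨hd0, hd1⟩
  have h0 : cround ((c : ℂ) + (d : ℂ) * Complex.I) = 0 := by
    unfold cround
    have : ((c : ℂ) + (d : ℂ) * Complex.I).re = c := by simp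
    have : ((c : ℂ) + (d : ℂ) * Complex.I).im = d := by simp
    simp [hc, hd]
  unfold cdist
  rw [harg, h0]
  ring

/-- The Gaussian-kernel integral of the circular distance over `F_M` equals the
corresponding Gaussian integral over `S_M`. -/
theorem stmt10 (M : ℂ) (hM : IsGaussInt M) (hMne : M ≠ 0) (N : ℂ)
    (σ : ℝ) (hσ : 0 < σ) :
    (∫ r in FM M, Real.exp (-(‖cdist M r N‖ ^ 2) / (2 * σ ^ 2))) =
    (∫ w in SM M, Real.exp (-(‖w‖ ^ 2) / (2 * σ ^ 2))) := by
  classical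
  set f : ℂ → ℝ := fun r => Real.exp (-(‖cdist M r N‖ ^ 2) / (2 * σ ^ 2)) with hfdef
  -- the ℝ-linear equivalence "multiplication by M"
  have hcomp1 : (LinearMap.mulLeft ℝ M).comp (LinearMap.mulLeft ℝ M⁻¹) = LinearMap.id := by
    ext z
    simp [LinearMap.mulLeft_apply, ← mul_assoc, mul_inv_cancel₀ hMne]
  have hcomp2 : (LinearMap.mulLeft ℝ M⁻¹).comp (LinearMap.mulLeft ℝ M) = LinearMap.id := by
    ext z
    simp [LinearMap.mulLeft_apply, ← mul_assoc, inv_mul_cancel₀ hMne]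
  set e : ℂ ≃ₗ[ℝ] ℂ :=
    LinearEquiv.ofLinear (LinearMap.mulLeft ℝ M) (LinearMap.mulLeft ℝ M⁻¹) hcomp1 hcomp2
    with hedef
  set b : Module.Basis (Fin 2) ℝ ℂ := Complex.basisOneI.map e with hbdef
  have hb0 : b 0 = M := by
    simp [hbdef, hedef, Module.Basis.map_apply, Complex.coe_basisOneI]
  have hb1 : b 1 = M * Complex.I := by
    simp [hbdef, hedef, Module.Basis.map_apply, Complex.coe_basisOneI]
  have hbrepr : ∀ (z : ℂ) (i : Fin 2), b.repr z i = Complex.basisOneI.repr (M⁻¹ * z) i := by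
    intro z i
    simp [hbdef, hedef, Module.Basis.map_repr]
  -- F_M is the fundamental domain of the lattice basis b
  have hFD : FM M = ZSpan.fundamentalDomain b := by
    ext z
    simp only [ZSpan.fundamentalDomain, Set.mem_setOf_eq, FM]
    constructor
    · rintro ⟨a, c, ha0, ha1, hc0, hc1, rfl⟩
      intro i
      have key : M⁻¹ * (M * ((a : ℂ) + (c : ℂ) * Complex.I))
          = (a : ℂ) + (c : ℂ) * Complex.I := by
        rw [← mul_assoc, inv_mul_cancel₀ hMne, one_mul]
      fin_cases i <;>
        simp [hbrepr, key, Complex.coe_basisOneI_repr, Set.mem_Ico] <;>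
        constructor <;> assumption
    · intro h
      have h0 := h 0
      have h1 := h 1
      rw [hbrepr] at h0 h1
      simp only [Complex.coe_basisOneI_repr, Matrix.cons_val_zero, Matrix.cons_val_one,
        Matrix.head_cons, Set.mem_Ico] at h0 h1
      refine ⟨(M⁻¹ * z).re, (M⁻¹ * z).im, h0.1, h0.2, h1.1, h1.2, ?_⟩
      rw [Complex.re_add_im, ← mul_assoc, mul_inv_cancel₀ hMne, one_mul]
  have hFmeas : MeasurableSet (ZSpan.fundamentalDomain b) :=
    ZSpan.fundamentalDomain_measurableSet b
  -- S_M is a translate of F_M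
  set v : ℂ := -(M / 2) - M * Complex.I / 2 with hvdef
  have hSM : SM M = v +ᵥ FM M := by
    ext z
    simp only [SM, FM, Set.mem_setOf_eq, Set.mem_vadd_set_iff_neg_vadd_mem, vadd_eq_add]
    constructor
    · rintro ⟨c, d, hc0, hc1, hd0, hd1, rfl⟩
      refine ⟨c + 1/2, d + 1/2, by linarith, by linarith, by linarith, by linarith, ?_⟩
      rw [hvdef]
      push_cast
      ring
    · rintro ⟨a, c, ha0, ha1, hc0, hc1, heq⟩
      refine ⟨a - 1/2, c - 1/2, by linarith, by linarith, by linarith, by linarith, ?_⟩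
      have hz : z = v + M * ((a : ℂ) + (c : ℂ) * Complex.I) := by
        rw [← heq]; ring
      rw [hz, hvdef]
      push_cast
      ring
  -- the lattice and its fundamental-domain properties
  set Λ : AddSubgroup ℂ := (Submodule.span ℤ (Set.range ⇑b)).toAddSubgroup with hΛdef
  haveI : Countable Λ := inferInstanceAs (Countable (Submodule.span ℤ (Set.range ⇑b)))
  have hF : IsAddFundamentalDomain Λ (ZSpan.fundamentalDomain b) volume :=
    ZSpan.isAddFundamentalDomain' b volume
  have hT : IsAddFundamentalDomain Λ ((N + v) +ᵥ ZSpan.fundamentalDomain b) volume :=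
    hF.vadd_of_comm (N + v)
  -- the integrand is Λ-periodic
  have hinv : ∀ (g : Λ) (x : ℂ), f (g +ᵥ x) = f x := by
    intro g x
    obtain ⟨c, hc⟩ := (Submodule.mem_span_range_iff_exists_fun ℤ).1
      ((Submodule.mem_toAddSubgroup _).1 g.2)
    have hg : (g : ℂ) = M * ((c 0 : ℂ) + (c 1 : ℂ) * Complex.I) := by
      rw [← hc, Fin.sum_univ_two, hb0, hb1]
      push_cast [zsmul_eq_mul]
      ring
    show f ((g : ℂ) + x) = f x
    rw [hfdef]
    simp only
    rw [hg, add_comm, cdist_period M N x hMne (c 0) (c 1)]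
  -- the two integrals over fundamental domains agree
  have step1 : (∫ r in FM M, f r)
      = ∫ r in (N + v) +ᵥ ZSpan.fundamentalDomain b, f r := by
    rw [hFD]
    exact hF.setIntegral_eq hT hinv
  have hNvS : (N + v) +ᵥ ZSpan.fundamentalDomain b = N +ᵥ SM M := by
    rw [hSM, hFD, vadd_vadd]
  have step2 : (∫ r in (N + v) +ᵥ ZSpan.fundamentalDomain b, f r)
      = ∫ x in SM M, f (N + x) := by
    rw [hNvS]
    have hkey := (measurePreserving_add_left volume N).setIntegral_preimage_emb
      (MeasurableEquiv.addLeft N).measurableEmbedding f (N +ᵥ SM M)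
    have hpre : (fun x => N + x) ⁻¹' (N +ᵥ SM M) = SM M := by
      ext z
      exact Set.vadd_mem_vadd_set_iff
    rw [← hkey, hpre]
  have hSMmeas : MeasurableSet (SM M) := by
    rw [hSM, hFD]
    exact hFmeas.const_vadd v
  have step3 : (∫ x in SM M, f (N + x))
      = ∫ w in SM M, Real.exp (-(‖w‖ ^ 2) / (2 * σ ^ 2)) := by
    refine setIntegral_congr_fun hSMmeas ?_
    rintro x ⟨c, d, hc0, hc1, hd0, hd1, rfl⟩
    rw [hfdef]
    simp only
    rw [cdist_of_small M N hMne c d hc0 hc1 hd0 hd1]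
  show (∫ r in FM M, f r) = _
  rw [step1, step2, step3]
end
end

section
/- Let M be a nonzero Gaussian integer, N a complex number, and σ > 0 with |M| ≥ 6√2·σ. Then (1/(2πσ²)) · ∬_{F_M} exp(−|d_M(r, N)|²/(2σ²)) dA(r) > 0.9973². -/
open Complex MeasureTheory

noncomputable section

namespace Stmt11Aux

/-- The basis `(M, M·I)` of `ℂ` over `ℝ`. -/
def gbasis (M : ℂ) (hMne : M ≠ 0) : Module.Basis (Fin 2) ℝ ℂ :=
  Complex.basisOneI.map ((LinearEquiv.smulOfNeZero ℂ ℂ M hMne).restrictScalars ℝ)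

lemma gbasis_repr (M : ℂ) (hMne : M ≠ 0) (z : ℂ) (i : Fin 2) :
    (gbasis M hMne).repr z i = ![(z / M).re, (z / M).im] i := by
  have : (gbasis M hMne).repr z = Complex.basisOneI.repr (M⁻¹ * z) := by
    simp [gbasis]
    congr 1
  rw [this, Complex.coe_basisOneI_repr, inv_mul_eq_div]

lemma FM_eq (M : ℂ) (hMne : M ≠ 0) :
    FM M = ZSpan.fundamentalDomain (gbasis M hMne) := by
  ext z
  simp only [FM, Set.mem_setOf_eq, ZSpan.fundamentalDomain, gbasis_repr M hMne,
    Set.mem_Ico]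
  constructor
  · rintro ⟨a, b, h0, h1, h2, h3, rfl⟩ i
    have hz : (M * ((a : ℂ) + (b : ℂ) * Complex.I)) / M = (a : ℂ) + (b : ℂ) * Complex.I :=
      mul_div_cancel_left₀ _ hMne
    fin_cases i <;> simp [hz, h0, h1, h2, h3]
  · intro h
    have h0 := h 0; have h1 := h 1
    simp only [Matrix.cons_val_zero, Matrix.cons_val_one, Matrix.head_cons] at h0 h1
    refine ⟨(z / M).re, (z / M).im, h0.1, h0.2, h1.1, h1.2, ?_⟩
    rw [re_add_im, mul_div_cancel₀ z hMne]

lemma mem_lattice (M : ℂ) (hMne : M ≠ 0) (γ : ℂ)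
    (h : γ ∈ Submodule.span ℤ (Set.range ⇑(gbasis M hMne))) :
    ∃ a b : ℤ, γ = M * ((a : ℂ) + (b : ℂ) * Complex.I) := by
  rw [Submodule.mem_span_range_iff_exists_fun] at h
  obtain ⟨c, hc⟩ := h
  refine ⟨c 0, c 1, ?_⟩
  rw [← hc]
  have h0 : gbasis M hMne 0 = M := by
    simp [gbasis, Complex.coe_basisOneI]
  have h1 : gbasis M hMne 1 = M * Complex.I := by
    simp [gbasis, Complex.coe_basisOneI]
  rw [Fin.sum_univ_two, h0, h1]
  push_cast [zsmul_eq_mul]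
  ring

lemma cdist_vadd (M : ℂ) (hMne : M ≠ 0) (N : ℂ) (a b : ℤ) (x : ℂ) :
    cdist M (M * ((a : ℂ) + (b : ℂ) * Complex.I) + x) N = cdist M x N := by
  unfold cdist cround
  have h1 : (M * ((a : ℂ) + (b : ℂ) * Complex.I) + x - N) / M
      = (x - N) / M + ((a : ℂ) + (b : ℂ) * Complex.I) := by
    field_simp
    ring
  rw [h1]
  have hre : ((x - N) / M + ((a : ℂ) + (b : ℂ) * Complex.I)).re
      = ((x - N) / M).re + a := by simp
  have him : ((x - N) / M + ((a : ℂ) + (b : ℂ) * Complex.I)).im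
      = ((x - N) / M).im + b := by simp
  rw [hre, him, round_add_intCast, round_add_intCast]
  push_cast
  ring


lemma mem_D_iff (M : ℂ) (hMne : M ≠ 0) (N r : ℂ) :
    r - (N - M * (((1:ℝ)/2 : ℂ) + ((1:ℝ)/2 : ℂ) * Complex.I))
      ∈ ZSpan.fundamentalDomain (gbasis M hMne)
    ↔ (-(1/2) ≤ ((r - N)/M).re ∧ ((r - N)/M).re < 1/2 ∧
        -(1/2) ≤ ((r - N)/M).im ∧ ((r - N)/M).im < 1/2) := by
  rw [ZSpan.mem_fundamentalDomain]
  have key : (r - (N - M * (((1:ℝ)/2 : ℂ) + ((1:ℝ)/2 : ℂ) * Complex.I))) / M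
      = (r - N)/M + (((1:ℝ)/2 : ℂ) + ((1:ℝ)/2 : ℂ) * Complex.I) := by
    field_simp
    ring
  have hre : ((r - (N - M * (((1:ℝ)/2 : ℂ) + ((1:ℝ)/2 : ℂ) * Complex.I))) / M).re
      = ((r - N)/M).re + 1/2 := by rw [key]; simp
  have him : ((r - (N - M * (((1:ℝ)/2 : ℂ) + ((1:ℝ)/2 : ℂ) * Complex.I))) / M).im
      = ((r - N)/M).im + 1/2 := by rw [key]; simp
  rw [Fin.forall_fin_two]
  simp only [gbasis_repr M hMne, Matrix.cons_val_zero, Matrix.cons_val_one, Matrix.head_cons,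
    Set.mem_Ico, hre, him]
  constructor
  · rintro ⟨⟨a1, a2⟩, ⟨b1, b2⟩⟩
    exact ⟨by linarith, by linarith, by linarith, by linarith⟩
  · rintro ⟨a1, a2, b1, b2⟩
    exact ⟨⟨by linarith, by linarith⟩, ⟨by linarith, by linarith⟩⟩

lemma integral_ball (σ R : ℝ) (hσ : 0 < σ) (hR : 0 < R) :
    ∫ z in Metric.ball (0 : ℂ) R, Real.exp (-(‖z‖) ^ 2 / (2 * σ ^ 2))
      = 2 * Real.pi * σ ^ 2 * (1 - Real.exp (-(R ^ 2) / (2 * σ ^ 2))) := by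
  have key := Complex.integral_comp_polarCoord_symm
    (Set.indicator (Metric.ball (0 : ℂ) R) (fun z => Real.exp (-(‖z‖) ^ 2 / (2 * σ ^ 2))))
  rw [integral_indicator measurableSet_ball] at key
  rw [← key]
  have hcongr : ∀ p ∈ polarCoord.target,
      p.1 • (Set.indicator (Metric.ball (0 : ℂ) R)
          (fun z => Real.exp (-(‖z‖) ^ 2 / (2 * σ ^ 2))) (Complex.polarCoord.symm p))
        = (Set.indicator (Set.Iio R) (fun r => r * Real.exp (-(r ^ 2) / (2 * σ ^ 2))) p.1)
            * (fun _ : ℝ => (1 : ℝ)) p.2 := by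
    rintro ⟨r, θ⟩ ⟨hr, hθ⟩
    simp only [Set.mem_Ioi] at hr
    have habs : ‖Complex.polarCoord.symm (r, θ)‖ = r := by
      rw [Complex.norm_polarCoord_symm, abs_of_pos hr]
    have hmem : Complex.polarCoord.symm (r, θ) ∈ Metric.ball (0 : ℂ) R ↔ r < R := by
      rw [Metric.mem_ball, Complex.dist_eq, sub_zero, habs]
    by_cases h : r < R
    · rw [Set.indicator_of_mem (hmem.mpr h), Set.indicator_of_mem (by simpa using h)]
      simp only [habs, smul_eq_mul, mul_one]
    · rw [Set.indicator_of_notMem (fun hc => h (hmem.mp hc)),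
        Set.indicator_of_notMem (by simpa using h)]
      simp
  rw [setIntegral_congr_fun (polarCoord.open_target.measurableSet) hcongr]
  have htarget : polarCoord.target = Set.Ioi (0:ℝ) ×ˢ Set.Ioo (-Real.pi) Real.pi := rfl
  rw [htarget, Measure.volume_eq_prod]
  have hprod := setIntegral_prod_mul (μ := (volume : Measure ℝ)) (ν := (volume : Measure ℝ))
    (f := fun r => Set.indicator (Set.Iio R) (fun r => r * Real.exp (-(r ^ 2) / (2 * σ ^ 2))) r)
    (g := fun _ : ℝ => (1:ℝ)) (Set.Ioi (0:ℝ)) (Set.Ioo (-Real.pi) Real.pi)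
  rw [hprod]
  have h1 : ∫ r in Set.Ioi (0:ℝ),
      Set.indicator (Set.Iio R) (fun r => r * Real.exp (-(r ^ 2) / (2 * σ ^ 2))) r
      = σ ^ 2 * (1 - Real.exp (-(R ^ 2) / (2 * σ ^ 2))) := by
    rw [setIntegral_indicator measurableSet_Iio, Set.Ioi_inter_Iio]
    rw [← integral_Ioc_eq_integral_Ioo, ← intervalIntegral.integral_of_le hR.le]
    have hftc : ∀ x ∈ Set.uIcc (0:ℝ) R,
        HasDerivAt (fun r : ℝ => -σ ^ 2 * Real.exp (-(r ^ 2) / (2 * σ ^ 2)))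
          (x * Real.exp (-(x ^ 2) / (2 * σ ^ 2))) x := by
      intro x _
      have h1 : HasDerivAt (fun r : ℝ => -(r ^ 2) / (2 * σ ^ 2))
          (-(2 * x) / (2 * σ ^ 2)) x := by
        simpa using ((hasDerivAt_pow 2 x).neg).div_const (2 * σ ^ 2)
      have h2 := (h1.exp).const_mul (-σ ^ 2)
      refine h2.congr_deriv ?_
      field_simp
    rw [intervalIntegral.integral_eq_sub_of_hasDerivAt hftc
      (by apply Continuous.intervalIntegrable; fun_prop)]
    simp [Real.exp_zero]
    ring
  have h2 : ∫ (_ : ℝ) in Set.Ioo (-Real.pi) Real.pi, (1:ℝ) = 2 * Real.pi := by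
    simp [Real.volume_Ioo]
    rw [max_eq_left (by positivity)]
    ring
  rw [h1, h2]
  ring

end Stmt11Aux

/-- If `|M| ≥ 6√2·σ`, then
`(1/(2πσ²)) ∬_{F_M} exp(-|d_M(r,N)|²/(2σ²)) dA > 0.9973²`. -/
theorem stmt11 (M : ℂ) (hM : IsGaussInt M) (hMne : M ≠ 0) (N : ℂ)
    (σ : ℝ) (hσ : 0 < σ) (habs : 6 * Real.sqrt 2 * σ ≤ ‖M‖) :
    (0.9973 : ℝ) ^ 2 <
      (1 / (2 * Real.pi * σ ^ 2)) *
        ∫ r in FM M, Real.exp (-(‖cdist M r N‖ ^ 2) / (2 * σ ^ 2)) := by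
  classical
  set b : Module.Basis (Fin 2) ℝ ℂ := Stmt11Aux.gbasis M hMne with hb
  set L := Submodule.span ℤ (Set.range ⇑b) with hL
  set v : ℂ := N - M * (((1:ℝ)/2 : ℂ) + ((1:ℝ)/2 : ℂ) * Complex.I) with hv
  set D : Set ℂ := (fun z => z - v) ⁻¹' (ZSpan.fundamentalDomain b) with hD
  haveI hmv : MeasurableVAdd ↥L ℂ := by
    constructor
    · intro x
      show Measurable fun c : ↥L => (c : ℂ) + x
      exact measurable_subtype_coe.add_const _
  haveI hvi : VAddInvariantMeasure ↥L ℂ volume := by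
    constructor
    intro c s hs
    have : (fun x : ℂ => c +ᵥ x) ⁻¹' s = (fun x : ℂ => (c : ℂ) + x) ⁻¹' s := rfl
    rw [this]
    exact measure_preimage_add volume (c : ℂ) s
  have hfd₁ : IsAddFundamentalDomain L (ZSpan.fundamentalDomain b) volume :=
    ZSpan.isAddFundamentalDomain b volume
  have hfd₂ : IsAddFundamentalDomain L D volume := by
    refine hfd₁.preimage_of_equiv (f := fun z => z - v)
      ((measurePreserving_sub_right volume v).quasiMeasurePreserving)
      (e := id) Function.bijective_id (fun γ x => ?_)
    show ((γ : ℂ) + x) - v = (γ : ℂ) + (x - v)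
    ring
  have hinv : ∀ (γ : L) (x : ℂ),
      (fun r => Real.exp (-(‖cdist M r N‖ ^ 2) / (2 * σ ^ 2))) (γ +ᵥ x)
      = (fun r => Real.exp (-(‖cdist M r N‖ ^ 2) / (2 * σ ^ 2))) x := by
    intro γ x
    obtain ⟨a, c, hac⟩ := Stmt11Aux.mem_lattice M hMne γ γ.2
    show Real.exp (-(‖cdist M ((γ : ℂ) + x) N‖ ^ 2) / (2 * σ ^ 2)) = _
    rw [hac, Stmt11Aux.cdist_vadd M hMne N a c x]
  have step1 : (∫ r in FM M, Real.exp (-(‖cdist M r N‖ ^ 2) / (2 * σ ^ 2)))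
      = ∫ r in D, Real.exp (-(‖cdist M r N‖ ^ 2) / (2 * σ ^ 2)) := by
    rw [Stmt11Aux.FM_eq M hMne]
    exact hfd₁.setIntegral_eq hfd₂ hinv
  have hmemD : ∀ r : ℂ, r ∈ D ↔ (-(1/2) ≤ ((r - N)/M).re ∧ ((r - N)/M).re < 1/2 ∧
      -(1/2) ≤ ((r - N)/M).im ∧ ((r - N)/M).im < 1/2) := fun r =>
    Stmt11Aux.mem_D_iff M hMne N r
  have hround : ∀ r ∈ D, cdist M r N = r - N := by
    intro r hr
    rw [hmemD r] at hr
    obtain ⟨h1, h2, h3, h4⟩ := hr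
    have hr1 : round ((r - N)/M).re = 0 := by
      rw [round_eq, Int.floor_eq_zero_iff]
      exact Set.mem_Ico.mpr ⟨by linarith, by linarith⟩
    have hr2 : round ((r - N)/M).im = 0 := by
      rw [round_eq, Int.floor_eq_zero_iff]
      exact Set.mem_Ico.mpr ⟨by linarith, by linarith⟩
    unfold cdist cround
    rw [hr1, hr2]
    simp
  have hDmeas : MeasurableSet D :=
    (ZSpan.fundamentalDomain_measurableSet b).preimage (measurable_id.sub measurable_const)
  have step2 : (∫ r in D, Real.exp (-(‖cdist M r N‖ ^ 2) / (2 * σ ^ 2)))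
      = ∫ r in D, Real.exp (-(‖r - N‖) ^ 2 / (2 * σ ^ 2)) := by
    refine setIntegral_congr_fun hDmeas (fun r hr => ?_)
    rw [hround r hr]
  have hTmeas : MeasurableSet ((fun z : ℂ => z + N) ⁻¹' D) :=
    hDmeas.preimage (measurable_id.add_const N)
  have step3 : (∫ r in D, Real.exp (-(‖r - N‖) ^ 2 / (2 * σ ^ 2)))
      = ∫ z in (fun z : ℂ => z + N) ⁻¹' D, Real.exp (-(‖z‖) ^ 2 / (2 * σ ^ 2)) := by
    rw [← (measurePreserving_add_right volume N).setIntegral_preimage_emb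
      (MeasurableEquiv.addRight N).measurableEmbedding
      (fun y => Real.exp (-(‖y - N‖) ^ 2 / (2 * σ ^ 2))) D]
    refine setIntegral_congr_fun hTmeas (fun z hz => ?_)
    simp
  set R : ℝ := 3 * Real.sqrt 2 * σ with hRdef
  have hsqrt2 : (0:ℝ) < Real.sqrt 2 := Real.sqrt_pos.mpr (by norm_num)
  have hRpos : 0 < R := by positivity
  have hMabs : 2 * R ≤ ‖M‖ := by rw [hRdef]; linarith
  have hMpos : (0:ℝ) < ‖M‖ := lt_of_lt_of_le (by linarith) hMabs
  have hsub : Metric.ball (0:ℂ) R ⊆ (fun z : ℂ => z + N) ⁻¹' D := by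
    intro z hz
    have hzabs : ‖z‖ < R := by
      simpa [Complex.dist_eq] using hz
    have h2 : ‖z / M‖ < 1/2 := by
      rw [norm_div, div_lt_iff₀ hMpos]
      calc ‖z‖ < R := hzabs
        _ ≤ 1/2 * ‖M‖ := by linarith
    have hre : |(z/M).re| < 1/2 := lt_of_le_of_lt (Complex.abs_re_le_norm _) h2
    have him : |(z/M).im| < 1/2 := lt_of_le_of_lt (Complex.abs_im_le_norm _) h2
    rw [abs_lt] at hre him
    show z + N ∈ D
    rw [hmemD]
    rw [add_sub_cancel_right]
    exact ⟨le_of_lt hre.1, hre.2, le_of_lt him.1, him.2⟩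
  have hTbdd : (fun z : ℂ => z + N) ⁻¹' D ⊆ Metric.closedBall 0 (‖M‖) := by
    intro z hz
    have hz' : z + N ∈ D := hz
    rw [hmemD, add_sub_cancel_right] at hz'
    obtain ⟨h1, h2, h3, h4⟩ := hz'
    have hre : |(z/M).re| ≤ 1/2 := abs_le.mpr ⟨by linarith, by linarith⟩
    have him : |(z/M).im| ≤ 1/2 := abs_le.mpr ⟨by linarith, by linarith⟩
    have hle : ‖z / M‖ ≤ 1 :=
      le_trans (Complex.norm_le_abs_re_add_abs_im _) (by linarith)
    rw [Metric.mem_closedBall, Complex.dist_eq, sub_zero]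
    have : ‖z‖ = ‖z / M‖ * ‖M‖ := by
      rw [norm_div]
      field_simp
    rw [this]
    nlinarith
  have hcont : Continuous (fun z : ℂ => Real.exp (-(‖z‖) ^ 2 / (2 * σ ^ 2))) := by
    apply Real.continuous_exp.comp
    exact ((continuous_norm.pow 2).neg).div_const _
  have hint : IntegrableOn (fun z : ℂ => Real.exp (-(‖z‖) ^ 2 / (2 * σ ^ 2)))
      ((fun z : ℂ => z + N) ⁻¹' D) volume :=
    ((hcont.continuousOn).integrableOn_compact
      (isCompact_closedBall (0:ℂ) (‖M‖))).mono_set hTbdd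
  have step4 : (∫ z in Metric.ball (0:ℂ) R, Real.exp (-(‖z‖) ^ 2 / (2 * σ ^ 2)))
      ≤ ∫ z in (fun z : ℂ => z + N) ⁻¹' D, Real.exp (-(‖z‖) ^ 2 / (2 * σ ^ 2)) :=
    setIntegral_mono_set hint
      (Filter.Eventually.of_forall fun z => Real.exp_nonneg _)
      (HasSubset.Subset.eventuallyLE hsub)
  have hball := Stmt11Aux.integral_ball σ R hσ hRpos
  have hR9 : -(R ^ 2) / (2 * σ ^ 2) = -9 := by
    have hRsq : R ^ 2 = 18 * σ ^ 2 := by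
      rw [hRdef, mul_pow, mul_pow, Real.sq_sqrt (by norm_num : (0:ℝ) ≤ 2)]
      ring
    rw [hRsq]
    field_simp
    ring
  rw [hR9] at hball
  have h2π : (0:ℝ) < 2 * Real.pi * σ ^ 2 := by positivity
  have hnum : (0.9973:ℝ)^2 < 1 - Real.exp (-9) := by
    have h1 : Real.exp 9 = Real.exp 1 ^ 9 := by
      rw [← Real.exp_nat_mul]
      norm_num
    have h2 : (2.7:ℝ)^9 < Real.exp 1 ^ 9 := by
      apply pow_lt_pow_left₀ _ (by norm_num) (by norm_num)
      exact lt_trans (by norm_num) Real.exp_one_gt_d9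
    have h3 : (2.7:ℝ)^9 < Real.exp 9 := h1 ▸ h2
    have h4 : Real.exp (-9) * Real.exp 9 = 1 := by
      rw [← Real.exp_add]
      norm_num
    nlinarith [Real.exp_pos (-9)]
  calc (0.9973:ℝ)^2 < 1 - Real.exp (-9) := hnum
    _ = (1 / (2 * Real.pi * σ ^ 2)) * (2 * Real.pi * σ ^ 2 * (1 - Real.exp (-9))) := by
        field_simp
    _ ≤ (1 / (2 * Real.pi * σ ^ 2)) *
        ∫ r in FM M, Real.exp (-(‖cdist M r N‖ ^ 2) / (2 * σ ^ 2)) := by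
        apply mul_le_mul_of_nonneg_left _ (by positivity)
        rw [step1, step2, step3, ← hball]
        exact step4
end
end

section
/- Let M be a positive integer and Γ₁, …, Γ_L pairwise coprime Gaussian integers with |Γ_i| ≥ √2 for each i, such that Γ = Γ₁⋯Γ_L is a positive integer; let γ_i = Γ/Γ_i and γ̄_i, Γ̄_i ∈ ℤ[i] with γ_i·γ̄_i + Γ_i·Γ̄_i = 1. Let r̃_i ∈ F_{MΓ_i} be given complex numbers and σ_i > 0 for i = 1, …, L. Suppose r̂^c ∈ F_M minimizes x ↦ Σ_{i=1}^{L} (1/σ_i²)·|d_M(⟨r̃_i⟩_M, x)|² over x ∈ F_M. Define q̂_i := [(r̃_i − r̂^c)/M], N̂₀ := ⟨ Σ_{i=1}^{L} γ̄_i·γ_i·q̂_i ⟩_Γ, and N̂ := M·N̂₀ + r̂^c. Then N̂ ∈ F_{MΓ} and N̂ minimizes z ↦ Σ_{i=1}^{L} (1/σ_i²)·|d_{MΓ_i}(r̃_i, z)|² over z ∈ F_{MΓ}. -/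
open Complex MeasureTheory

noncomputable section

section Helpers

lemma gi_add {x y : ℂ} (hx : IsGaussInt x) (hy : IsGaussInt y) : IsGaussInt (x + y) := by
  obtain ⟨a, b, rfl⟩ := hx; obtain ⟨c, d, rfl⟩ := hy
  exact ⟨a + c, b + d, by push_cast; ring⟩

lemma gi_neg {x : ℂ} (hx : IsGaussInt x) : IsGaussInt (-x) := by
  obtain ⟨a, b, rfl⟩ := hx
  exact ⟨-a, -b, by push_cast; ring⟩

lemma gi_sub {x y : ℂ} (hx : IsGaussInt x) (hy : IsGaussInt y) : IsGaussInt (x - y) := by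
  rw [sub_eq_add_neg]; exact gi_add hx (gi_neg hy)

lemma gi_mul {x y : ℂ} (hx : IsGaussInt x) (hy : IsGaussInt y) : IsGaussInt (x * y) := by
  obtain ⟨a, b, rfl⟩ := hx; obtain ⟨c, d, rfl⟩ := hy
  refine ⟨a * c - b * d, a * d + b * c, ?_⟩
  push_cast
  linear_combination ((b : ℂ) * d) * Complex.I_sq

lemma gi_one : IsGaussInt 1 := ⟨1, 0, by push_cast; ring⟩

lemma gi_zero : IsGaussInt 0 := ⟨0, 0, by push_cast; ring⟩

lemma gi_sum {ι : Type*} {s : Finset ι} {f : ι → ℂ} (h : ∀ i ∈ s, IsGaussInt (f i)) :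
    IsGaussInt (∑ i ∈ s, f i) := by
  classical
  induction s using Finset.cons_induction with
  | empty => simpa using gi_zero
  | cons a s ha ih =>
    rw [Finset.sum_cons]
    exact gi_add (h a (Finset.mem_cons_self a s)) (ih fun i hi => h i (Finset.mem_cons_of_mem hi))

lemma gi_prod {ι : Type*} {s : Finset ι} {f : ι → ℂ} (h : ∀ i ∈ s, IsGaussInt (f i)) :
    IsGaussInt (∏ i ∈ s, f i) := by
  classical
  induction s using Finset.cons_induction with
  | empty => simpa using gi_one
  | cons a s ha ih =>
    rw [Finset.prod_cons]
    exact gi_mul (h a (Finset.mem_cons_self a s)) (ih fun i hi => h i (Finset.mem_cons_of_mem hi))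

lemma gi_cround (z : ℂ) : IsGaussInt (cround z) := ⟨_, _, rfl⟩

lemma gi_cfloor (z : ℂ) : IsGaussInt (cfloor z) := ⟨_, _, rfl⟩

lemma cround_sub_gauss (w : ℂ) {g : ℂ} (hg : IsGaussInt g) : cround (w - g) = cround w - g := by
  obtain ⟨a, b, rfl⟩ := hg
  have h1 : (w - ((a : ℂ) + (b : ℂ) * Complex.I)).re = w.re - a := by simp
  have h2 : (w - ((a : ℂ) + (b : ℂ) * Complex.I)).im = w.im - b := by simp
  rw [cround, cround, h1, h2, round_sub_intCast, round_sub_intCast]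
  push_cast; ring

lemma cround_min (w : ℂ) {k : ℂ} (hk : IsGaussInt k) :
    ‖w - cround w‖ ≤ ‖w - k‖ := by
  obtain ⟨a, b, rfl⟩ := hk
  rw [Complex.norm_def, Complex.norm_def]
  apply Real.sqrt_le_sqrt
  rw [Complex.normSq_apply, Complex.normSq_apply]
  have e1 : (w - cround w).re = w.re - round w.re := by simp [cround]
  have e2 : (w - cround w).im = w.im - round w.im := by simp [cround]
  have e3 : (w - ((a : ℂ) + (b : ℂ) * Complex.I)).re = w.re - a := by simp
  have e4 : (w - ((a : ℂ) + (b : ℂ) * Complex.I)).im = w.im - b := by simp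
  rw [e1, e2, e3, e4]
  have hre := round_le w.re a
  have him := round_le w.im b
  have h1 : (w.re - round w.re) * (w.re - round w.re) ≤ (w.re - a) * (w.re - a) := by
    have := mul_self_le_mul_self (abs_nonneg _) hre
    rwa [abs_mul_abs_self, abs_mul_abs_self] at this
  have h2 : (w.im - round w.im) * (w.im - round w.im) ≤ (w.im - b) * (w.im - b) := by
    have := mul_self_le_mul_self (abs_nonneg _) him
    rwa [abs_mul_abs_self, abs_mul_abs_self] at this
  linarith

lemma cdist_min {m : ℂ} (hm : m ≠ 0) (x y : ℂ) {k : ℂ} (hk : IsGaussInt k) :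
    ‖cdist m x y‖ ≤ ‖x - y - m * k‖ := by
  have h1 : cdist m x y = m * ((x - y) / m - cround ((x - y) / m)) := by
    rw [cdist]; field_simp
  have h2 : x - y - m * k = m * ((x - y) / m - k) := by field_simp
  rw [h1, h2, norm_mul, norm_mul]
  exact mul_le_mul_of_nonneg_left (cround_min _ hk) (norm_nonneg m)

lemma cdist_shift {m : ℂ} (hm : m ≠ 0) (x y : ℂ) {g : ℂ} (hg : IsGaussInt g) :
    cdist m (x - m * g) y = cdist m x y := by
  have h : (x - m * g - y) / m = (x - y) / m - g := by field_simp; ring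
  rw [cdist, cdist, h, cround_sub_gauss _ hg]
  ring

lemma mem_FM_real {r : ℝ} (hr : 0 < r) {z : ℂ}
    (h1 : 0 ≤ z.re) (h2 : z.re < r) (h3 : 0 ≤ z.im) (h4 : z.im < r) : z ∈ FM ((r : ℝ) : ℂ) := by
  refine ⟨z.re / r, z.im / r, by positivity, by rwa [div_lt_one hr], by positivity,
    by rwa [div_lt_one hr], ?_⟩
  apply Complex.ext <;> push_cast <;> simp <;> field_simp

lemma FM_bounds {r : ℝ} (hr : 0 < r) {z : ℂ} (hz : z ∈ FM ((r : ℝ) : ℂ)) :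
    0 ≤ z.re ∧ z.re < r ∧ 0 ≤ z.im ∧ z.im < r := by
  obtain ⟨a, b, ha0, ha1, hb0, hb1, rfl⟩ := hz
  have hre : (((r : ℝ) : ℂ) * ((a : ℂ) + (b : ℂ) * Complex.I)).re = r * a := by simp
  have him : (((r : ℝ) : ℂ) * ((a : ℂ) + (b : ℂ) * Complex.I)).im = r * b := by simp
  rw [hre, him]
  refine ⟨by positivity, ?_, by positivity, ?_⟩ <;> nlinarith

lemma cmod_eq_sub (z m : ℂ) : cmod z m = z - m * cfloor (z / m) := rfl

lemma cmod_mem_FM {r : ℝ} (hr : 0 < r) (z : ℂ) : cmod z ((r : ℝ) : ℂ) ∈ FM ((r : ℝ) : ℂ) := by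
  have hrne : r ≠ 0 := hr.ne'
  have hcm : cmod z ((r : ℝ) : ℂ) =
      z - ((r : ℝ) : ℂ) * ((⌊z.re / r⌋ : ℂ) + (⌊z.im / r⌋ : ℂ) * Complex.I) := by
    rw [cmod, cfloor]
    simp
  have hre : (cmod z ((r : ℝ) : ℂ)).re = z.re - r * ⌊z.re / r⌋ := by rw [hcm]; simp
  have him : (cmod z ((r : ℝ) : ℂ)).im = z.im - r * ⌊z.im / r⌋ := by rw [hcm]; simp
  have hm1 : r * (z.re / r) = z.re := by field_simp
  have hm2 : r * (z.im / r) = z.im := by field_simp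
  have f1 := Int.fract_nonneg (z.re / r); have f2 := Int.fract_lt_one (z.re / r)
  have f3 := Int.fract_nonneg (z.im / r); have f4 := Int.fract_lt_one (z.im / r)
  rw [Int.fract] at f1 f2 f3 f4
  apply mem_FM_real hr <;> simp only [hre, him] <;> nlinarith

end Helpers


/-- Fast MLE C-CRT: if `r̂^c` minimizes the weighted circular-distance cost of
the reduced remainders over `F_M`, then the reconstruction
`N̂ = M·⟨Σ γ̄ᵢγᵢq̂ᵢ⟩_Γ + r̂^c` lies in `F_{MΓ}` and minimizes the MLE cost
over `F_{MΓ}`. -/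
theorem stmt12 (L : ℕ) (M : ℤ) (hM : 0 < M) (Γ : Fin L → ℂ)
    (hGauss : ∀ i, IsGaussInt (Γ i))
    (habs : ∀ i, Real.sqrt 2 ≤ ‖Γ i‖)
    (hcop : ∀ i j, i ≠ j → GaussCoprime (Γ i) (Γ j))
    (G : ℤ) (hGpos : 0 < G) (hGprod : (∏ i, Γ i) = (G : ℂ))
    (γ γbar Γbar : Fin L → ℂ)
    (hγ : ∀ i, γ i = (∏ j, Γ j) / Γ i)
    (hγbar : ∀ i, IsGaussInt (γbar i)) (hΓbar : ∀ i, IsGaussInt (Γbar i))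
    (hBezout : ∀ i, γ i * γbar i + Γ i * Γbar i = 1)
    (rt : Fin L → ℂ) (hrt : ∀ i, rt i ∈ FM ((M : ℂ) * Γ i))
    (σ : Fin L → ℝ) (hσ : ∀ i, 0 < σ i)
    (rchat : ℂ) (hrcF : rchat ∈ FM (M : ℂ))
    (hrcmin : ∀ x ∈ FM (M : ℂ),
      (∑ i, (1 / σ i ^ 2) * ‖cdist (M : ℂ) (cmod (rt i) (M : ℂ)) rchat‖ ^ 2) ≤
      (∑ i, (1 / σ i ^ 2) * ‖cdist (M : ℂ) (cmod (rt i) (M : ℂ)) x‖ ^ 2))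
    (qhat : Fin L → ℂ) (hqhat : ∀ i, qhat i = cround ((rt i - rchat) / (M : ℂ)))
    (N0hat : ℂ) (hN0hat : N0hat = cmod (∑ i, γbar i * γ i * qhat i) (∏ i, Γ i))
    (Nhat : ℂ) (hNhat : Nhat = (M : ℂ) * N0hat + rchat) :
    Nhat ∈ FM ((M : ℂ) * ∏ i, Γ i) ∧
    ∀ z ∈ FM ((M : ℂ) * ∏ i, Γ i),
      (∑ i, (1 / σ i ^ 2) * ‖cdist ((M : ℂ) * Γ i) (rt i) Nhat‖ ^ 2) ≤
      (∑ i, (1 / σ i ^ 2) * ‖cdist ((M : ℂ) * Γ i) (rt i) z‖ ^ 2) := by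

  classical
  have hMR : (0:ℝ) < (M:ℝ) := by exact_mod_cast hM
  have hGR : (0:ℝ) < (G:ℝ) := by exact_mod_cast hGpos
  have hMcast : (M:ℂ) = (((M:ℝ)):ℂ) := by norm_cast
  have hMne : (M:ℂ) ≠ 0 := by exact_mod_cast hM.ne'
  have hΓne : ∀ i, Γ i ≠ 0 := by
    intro i h
    have h2 := habs i
    rw [h, norm_zero] at h2
    have : (0:ℝ) < Real.sqrt 2 := Real.sqrt_pos.mpr (by norm_num)
    linarith
  have hMΓne : ∀ i, (M:ℂ) * Γ i ≠ 0 := fun i => mul_ne_zero hMne (hΓne i)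
  have hγ' : ∀ i, γ i = ∏ j ∈ Finset.univ.erase i, Γ j := by
    intro i
    rw [hγ i, ← Finset.mul_prod_erase Finset.univ Γ (Finset.mem_univ i),
      mul_div_cancel_left₀ _ (hΓne i)]
  have giγ : ∀ i, IsGaussInt (γ i) := fun i => (hγ' i) ▸ gi_prod (fun j _ => hGauss j)
  have giq : ∀ i, IsGaussInt (qhat i) := fun i => (hqhat i) ▸ gi_cround _
  set S := ∑ i, γbar i * γ i * qhat i with hS
  have giS : IsGaussInt S := gi_sum fun i _ => gi_mul (gi_mul (hγbar i) (giγ i)) (giq i)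
  set t := cfloor (S / (∏ i, Γ i)) with ht
  have hN0eq : N0hat = S - (∏ i, Γ i) * t := by rw [hN0hat]; rfl
  have giN0 : IsGaussInt N0hat :=
    hN0eq ▸ gi_sub giS (gi_mul (gi_prod fun j _ => hGauss j) (gi_cfloor _))
  have hdvd : ∀ i, ∃ k, IsGaussInt k ∧ qhat i - N0hat = Γ i * k := by
    intro i
    set P : Fin L → ℂ := fun j => ∏ l ∈ (Finset.univ.erase i).erase j, Γ l with hP
    refine ⟨Γbar i * qhat i - (∑ j ∈ Finset.univ.erase i, γbar j * P j * qhat j) + γ i * t,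
      gi_add (gi_sub (gi_mul (hΓbar i) (giq i))
        (gi_sum fun j _ => gi_mul (gi_mul (hγbar j) (gi_prod fun l _ => hGauss l)) (giq j)))
        (gi_mul (giγ i) (gi_cfloor _)), ?_⟩
    have f1 : Γ i * γ i = ∏ j, Γ j := by
      rw [hγ i, mul_comm]
      exact div_mul_cancel₀ _ (hΓne i)
    have f2 : ∀ j ∈ Finset.univ.erase i, Γ i * P j = γ j := by
      intro j hj
      have hji : j ≠ i := Finset.ne_of_mem_erase hj
      have hiej : i ∈ Finset.univ.erase j := Finset.mem_erase.mpr ⟨hji.symm, Finset.mem_univ i⟩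
      rw [hγ' j, ← Finset.mul_prod_erase _ Γ hiej]
      simp only [hP]
      rw [Finset.erase_right_comm]
    have hsum : Γ i * (∑ j ∈ Finset.univ.erase i, γbar j * P j * qhat j)
        = ∑ j ∈ Finset.univ.erase i, γbar j * γ j * qhat j := by
      rw [Finset.mul_sum]
      refine Finset.sum_congr rfl fun j hj => ?_
      rw [← f2 j hj]; ring
    have f4 : S = γbar i * γ i * qhat i + ∑ j ∈ Finset.univ.erase i, γbar j * γ j * qhat j :=
      (Finset.add_sum_erase _ _ (Finset.mem_univ i)).symm
    linear_combination (-1:ℂ) * hN0eq - f4 - qhat i * hBezout i + hsum - t * f1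
  have hd : ∀ i, cdist (M:ℂ) (cmod (rt i) (M:ℂ)) rchat = cdist (M:ℂ) (rt i) rchat := by
    intro i
    rw [cmod_eq_sub]
    exact cdist_shift hMne _ _ (gi_cfloor _)
  have habs_eq : ∀ i, ‖cdist ((M:ℂ) * Γ i) (rt i) Nhat‖
      = ‖cdist (M:ℂ) (rt i) rchat‖ := by
    intro i
    apply le_antisymm
    · obtain ⟨k, hkg, hkeq⟩ := hdvd i
      have heq : rt i - Nhat - ((M:ℂ) * Γ i) * k = cdist (M:ℂ) (rt i) rchat := by
        rw [cdist, ← hqhat i, hNhat]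
        linear_combination (M:ℂ) * hkeq
      rw [← heq]
      exact cdist_min (hMΓne i) _ _ hkg
    · have heq : cdist ((M:ℂ) * Γ i) (rt i) Nhat
          = rt i - rchat - (M:ℂ) * (N0hat + Γ i * cround ((rt i - Nhat) / ((M:ℂ) * Γ i))) := by
        rw [cdist, hNhat]; ring
      rw [heq]
      exact cdist_min hMne _ _ (gi_add giN0 (gi_mul (hGauss i) (gi_cround _)))
  have hzbound : ∀ (i : Fin L) (z : ℂ),
      ‖cdist (M:ℂ) (cmod (rt i) (M:ℂ)) (cmod z (M:ℂ))‖
      ≤ ‖cdist ((M:ℂ) * Γ i) (rt i) z‖ := by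
    intro i z
    have heq : cdist ((M:ℂ) * Γ i) (rt i) z
        = cmod (rt i) (M:ℂ) - cmod z (M:ℂ)
          - (M:ℂ) * (Γ i * cround ((rt i - z) / ((M:ℂ) * Γ i))
              - cfloor (rt i / (M:ℂ)) + cfloor (z / (M:ℂ))) := by
      rw [cdist, cmod_eq_sub, cmod_eq_sub]; ring
    rw [heq]
    exact cdist_min hMne _ _
      (gi_add (gi_sub (gi_mul (hGauss i) (gi_cround _)) (gi_cfloor _)) (gi_cfloor _))
  have hN0F : N0hat ∈ FM (((G:ℝ)):ℂ) := by
    have hc : ((G:ℤ):ℂ) = (((G:ℝ)):ℂ) := by norm_cast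
    rw [hN0hat, hGprod, hc]
    exact cmod_mem_FM hGR _
  obtain ⟨h1, h2, h3, h4⟩ := FM_bounds hGR hN0F
  obtain ⟨a, b, hab⟩ := giN0
  have hare : N0hat.re = (a:ℝ) := by rw [hab]; simp
  have haim : N0hat.im = (b:ℝ) := by rw [hab]; simp
  have ha1 : N0hat.re ≤ (G:ℝ) - 1 := by
    rw [hare] at h2 ⊢
    have : a < G := by exact_mod_cast h2
    have h6 : (a:ℝ) ≤ (G:ℝ) - 1 := by exact_mod_cast (by omega : a ≤ G - 1)
    linarith
  have hb1 : N0hat.im ≤ (G:ℝ) - 1 := by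
    rw [haim] at h4 ⊢
    have : b < G := by exact_mod_cast h4
    have h6 : (b:ℝ) ≤ (G:ℝ) - 1 := by exact_mod_cast (by omega : b ≤ G - 1)
    linarith
  have hrcF' : rchat ∈ FM (((M:ℝ)):ℂ) := by rw [← hMcast]; exact hrcF
  obtain ⟨r1, r2, r3, r4⟩ := FM_bounds hMR hrcF'
  have hmem : Nhat ∈ FM ((M:ℂ) * ∏ i, Γ i) := by
    have hcast : (M:ℂ) * ∏ i, Γ i = ((((M:ℝ) * (G:ℝ)):ℝ):ℂ) := by
      rw [hGprod]; push_cast; ring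
    rw [hcast]
    have hre : Nhat.re = (M:ℝ) * N0hat.re + rchat.re := by rw [hNhat]; simp
    have him : Nhat.im = (M:ℝ) * N0hat.im + rchat.im := by rw [hNhat]; simp
    apply mem_FM_real (by positivity) <;> simp only [hre, him] <;> nlinarith
  refine ⟨hmem, ?_⟩
  intro z hz
  have hzmem : cmod z (M:ℂ) ∈ FM (M:ℂ) := by
    rw [hMcast]; exact cmod_mem_FM hMR z
  calc (∑ i, (1 / σ i ^ 2) * ‖cdist ((M:ℂ) * Γ i) (rt i) Nhat‖ ^ 2)
      = ∑ i, (1 / σ i ^ 2) * ‖cdist (M:ℂ) (cmod (rt i) (M:ℂ)) rchat‖ ^ 2 := by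
        refine Finset.sum_congr rfl fun i _ => ?_
        rw [habs_eq i, ← hd i]
    _ ≤ ∑ i, (1 / σ i ^ 2) * ‖cdist (M:ℂ) (cmod (rt i) (M:ℂ)) (cmod z (M:ℂ))‖ ^ 2 :=
        hrcmin _ hzmem
    _ ≤ ∑ i, (1 / σ i ^ 2) * ‖cdist ((M:ℂ) * Γ i) (rt i) z‖ ^ 2 := by
        refine Finset.sum_le_sum fun i _ => ?_
        have h := hzbound i z
        have hσ2 : (0:ℝ) ≤ 1 / σ i ^ 2 := by positivity
        exact mul_le_mul_of_nonneg_left (pow_le_pow_left₀ (norm_nonneg _) h 2) hσ2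
end
end

section
/- Let M be a positive integer, r̃₁^c, …, r̃_L^c ∈ F_M complex numbers, and w₁, …, w_L positive reals with Σ_{i=1}^{L} w_i = 1. Let ς and υ be permutations of {1, …, L} with Re(r̃^c_{ς(1)}) ≤ Re(r̃^c_{ς(2)}) ≤ ⋯ ≤ Re(r̃^c_{ς(L)}) and Im(r̃^c_{υ(1)}) ≤ Im(r̃^c_{υ(2)}) ≤ ⋯ ≤ Im(r̃^c_{υ(L)}). If r̂^c ∈ F_M minimizes x ↦ Σ_{i=1}^{L} w_i·|d_M(r̃_i^c, x)|² over F_M, then there exist k₁, k₂ ∈ {1, 2, …, L} such that r̂^c = ⟨ Σ_{i=1}^{L} w_i·r̃_i^c + M·( Σ_{i=1}^{k₁} w_{ς(i)} + i·Σ_{i=1}^{k₂} w_{υ(i)} ) ⟩_M. -/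
open Complex MeasureTheory

noncomputable section

noncomputable def dd (m a x : ℝ) : ℝ := a - x - round ((a - x)/m) * m

lemma round_eq_of {t : ℝ} {n : ℤ} (h1 : -(1/2) ≤ t - n) (h2 : t - n < 1/2) : round t = n := by
  rw [round_eq, Int.floor_eq_iff]
  constructor <;> push_cast <;> linarith

lemma round_bounds (t : ℝ) : -(1/2) ≤ t - round t ∧ t - round t < 1/2 := by
  rw [round_eq]
  have h1 := Int.floor_le (t + 1/2)
  have h2 := Int.lt_floor_add_one (t + 1/2)
  constructor <;> linarith

lemma dd_lb {m : ℝ} (hm : 0 < m) (a x : ℝ) : -(m/2) ≤ dd m a x := by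
  have h := (round_bounds ((a-x)/m)).1
  have e : dd m a x = m * ((a-x)/m - round ((a-x)/m)) := by unfold dd; field_simp
  rw [e]; nlinarith

lemma dd_ub {m : ℝ} (hm : 0 < m) (a x : ℝ) : dd m a x < m/2 := by
  have h := (round_bounds ((a-x)/m)).2
  have e : dd m a x = m * ((a-x)/m - round ((a-x)/m)) := by unfold dd; field_simp
  rw [e]; nlinarith

lemma dd_periodic {m : ℝ} (hm : m ≠ 0) (a x : ℝ) (j : ℤ) : dd m a (x - j*m) = dd m a x := by
  unfold dd
  have h : (a - (x - j*m))/m = (a - x)/m + j := by field_simp; ring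
  rw [h, round_add_intCast]; push_cast; ring


lemma lowerset {L : ℕ} (J : Finset (Fin L)) (hJ : ∀ i j : Fin L, i ≤ j → j ∈ J → i ∈ J) :
    J = Finset.univ.filter (fun i : Fin L => (i : ℕ) < J.card) := by
  ext i
  simp only [Finset.mem_filter, Finset.mem_univ, true_and]
  constructor
  · intro hi
    have hsub : Finset.Iic i ⊆ J := fun j hj => hJ j i (Finset.mem_Iic.mp hj) hi
    have h := Finset.card_le_card hsub
    rw [Fin.card_Iic] at h
    omega
  · intro hi
    by_contra hni
    have hsub : J ⊆ Finset.Iio i := by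
      intro j hj
      rw [Finset.mem_Iio]
      by_contra h
      exact hni (hJ i j (le_of_not_gt h) hj)
    have h := Finset.card_le_card hsub
    rw [Fin.card_Iio] at h
    omega

lemma cutoff_sum {L : ℕ} (r w : Fin L → ℝ) (ς : Equiv.Perm (Fin L))
    (hς : ∀ i j : Fin L, i ≤ j → r (ς i) ≤ r (ς j)) (c : ℝ) :
    ∑ i ∈ Finset.univ.filter (fun i => r i < c), w i
      = ∑ i ∈ Finset.univ.filter (fun i : Fin L =>
          (i:ℕ) < (Finset.univ.filter (fun j => r j < c)).card), w (ς i) ∧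
    (Finset.univ.filter (fun j : Fin L => r j < c)).card
      = (Finset.univ.filter (fun i : Fin L => r (ς i) < c)).card := by
  classical
  set J := Finset.univ.filter (fun i => r (ς i) < c) with hJdef
  have hJlow : ∀ i j : Fin L, i ≤ j → j ∈ J → i ∈ J := by
    intro i j hij hj
    simp only [hJdef, Finset.mem_filter, Finset.mem_univ, true_and] at *
    exact lt_of_le_of_lt (hς i j hij) hj
  have hcard : (Finset.univ.filter (fun j : Fin L => r j < c)).card = J.card := by
    rw [hJdef]
    rw [Finset.card_filter, Finset.card_filter]
    exact (Equiv.sum_comp ς (fun i => if r i < c then 1 else 0)).symm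
  have hsum : ∑ i ∈ Finset.univ.filter (fun i => r i < c), w i = ∑ i ∈ J, w (ς i) := by
    rw [Finset.sum_filter, hJdef, Finset.sum_filter]
    exact (Equiv.sum_comp ς (fun i => if r i < c then w i else 0)).symm
  refine ⟨?_, hcard⟩
  rw [hsum, hcard]
  congr 1
  exact lowerset J hJlow
lemma oneD {L : ℕ} (m : ℝ) (hm : 0 < m)
    (r : Fin L → ℝ) (hr0 : ∀ i, 0 ≤ r i) (hr1 : ∀ i, r i < m)
    (w : Fin L → ℝ) (hw : ∀ i, 0 < w i) (hsum : ∑ i, w i = 1)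
    (ς : Equiv.Perm (Fin L)) (hς : ∀ i j : Fin L, i ≤ j → r (ς i) ≤ r (ς j))
    (u : ℝ) (hu0 : 0 ≤ u) (hu1 : u < m)
    (hmin : ∀ x, 0 ≤ x → x < m →
      (∑ i, w i * (dd m (r i) u)^2) ≤ ∑ i, w i * (dd m (r i) x)^2) :
    ∃ k : ℕ, 1 ≤ k ∧ k ≤ L ∧ ∃ j : ℤ,
      u = (∑ i, w i * r i)
        + m * (∑ i ∈ Finset.univ.filter (fun i : Fin L => (i:ℕ) < k), w (ς i)) + j * m := by
  classical
  have hL : 0 < L := by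
    by_contra h
    push_neg at h
    interval_cases L
    simp at hsum
  have hne : (Finset.univ : Finset (Fin L)).Nonempty := ⟨⟨0, hL⟩, Finset.mem_univ _⟩
  -- extend minimality to all reals by periodicity
  have hminR : ∀ x : ℝ, (∑ i, w i * (dd m (r i) u)^2) ≤ ∑ i, w i * (dd m (r i) x)^2 := by
    intro x
    have h0 : 0 ≤ x - ⌊x/m⌋*m := by
      have := Int.floor_le (x/m)
      have h2 : (⌊x/m⌋ : ℝ) * m ≤ x := (le_div_iff₀ hm).mp this
      linarith
    have h1 : x - ⌊x/m⌋*m < m := by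
      have := Int.lt_floor_add_one (x/m)
      have h2 : x < ((⌊x/m⌋ : ℝ) + 1) * m := by
        rw [← div_lt_iff₀ hm]; push_cast; linarith
      nlinarith
    calc (∑ i, w i * (dd m (r i) u)^2) ≤ ∑ i, w i * (dd m (r i) (x - ⌊x/m⌋*m))^2 :=
          hmin _ h0 h1
      _ = ∑ i, w i * (dd m (r i) x)^2 := by
          apply Finset.sum_congr rfl
          intro i _
          rw [dd_periodic hm.ne' _ _ _]
  set d : Fin L → ℝ := fun i => dd m (r i) u with hd_def
  set n : Fin L → ℤ := fun i => round ((r i - u)/m) with hn_def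
  have hd : ∀ i, d i = r i - u - n i * m := fun i => rfl
  have hdlb : ∀ i, -(m/2) ≤ d i := fun i => dd_lb hm _ _
  have hdub : ∀ i, d i < m/2 := fun i => dd_ub hm _ _
  set D := ∑ i, w i * d i with hD_def
  set S := Finset.univ.filter (fun i => d i = -(m/2)) with hS_def
  set WS := ∑ i ∈ S, w i with hWS_def
  have hFu : (∑ i, w i * (dd m (r i) u)^2) = ∑ i, w i * (d i)^2 := rfl
  -- Claim A : 0 ≤ D
  have claimA : 0 ≤ D := by
    by_contra hDneg
    push_neg at hDneg
    set ε₀ := Finset.univ.inf' hne (fun i => m/2 - d i) with hε₀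
    have hε₀pos : 0 < ε₀ := by
      rw [hε₀, Finset.lt_inf'_iff]
      intro i _
      linarith [hdub i]
    set ε := min (ε₀/2) (-D) with hε
    have hεpos : 0 < ε := lt_min (by linarith) (by linarith)
    have hεlt : ∀ i, ε < m/2 - d i := by
      intro i
      have h1 : ε ≤ ε₀/2 := min_le_left _ _
      have h2 : ε₀ ≤ m/2 - d i := Finset.inf'_le _ (Finset.mem_univ i)
      linarith
    have hpert : ∀ i, dd m (r i) (u - ε) = d i + ε := by
      intro i
      have hdi : d i = r i - u - n i * m := hd i
      have hround : round ((r i - (u - ε))/m) = n i := by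
        apply round_eq_of
        · have e : (r i - (u - ε))/m - (n i : ℝ) = (d i + ε)/m := by
            rw [hdi]; field_simp; ring
          rw [e, le_div_iff₀ hm]
          linarith [hdlb i]
        · have e : (r i - (u - ε))/m - (n i : ℝ) = (d i + ε)/m := by
            rw [hdi]; field_simp; ring
          rw [e, div_lt_iff₀ hm]
          have := hεlt i
          linarith
      unfold dd
      rw [hround, hdi]
      ring
    have hF : (∑ i, w i * (dd m (r i) (u - ε))^2)
        = (∑ i, w i * (d i)^2) + 2*ε*D + ε^2 := by
      have h1 : ∀ i ∈ Finset.univ, w i * (dd m (r i) (u - ε))^2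
          = w i * (d i)^2 + 2*ε*(w i * d i) + ε^2 * w i := by
        intro i _
        rw [hpert i]; ring
      rw [Finset.sum_congr rfl h1]
      rw [Finset.sum_add_distrib, Finset.sum_add_distrib, ← Finset.mul_sum, ← Finset.mul_sum,
        hsum, ← hD_def]
      ring
    have hle := hminR (u - ε)
    rw [hFu, hF] at hle
    have h2 : ε ≤ -D := min_le_right _ _
    nlinarith
  -- Claim B : D + m * WS ≤ 0
  have claimB : D + m * WS ≤ 0 := by
    by_contra hB
    push_neg at hB
    set ε₁ := Finset.univ.inf' hne (fun i => if d i = -(m/2) then m else (d i + m/2)/2) with hε₁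
    have hε₁pos : 0 < ε₁ := by
      rw [hε₁, Finset.lt_inf'_iff]
      intro i _
      by_cases hi : d i = -(m/2)
      · rw [if_pos hi]; exact hm
      · rw [if_neg hi]
        have := hdlb i
        have hlt : -(m/2) < d i := lt_of_le_of_ne this (Ne.symm hi)
        linarith
    set ε := min (min ε₁ m) (D + m * WS) with hε
    have hεpos : 0 < ε := lt_min (lt_min hε₁pos hm) hB
    have hεm : ε ≤ m := le_trans (min_le_left _ _) (min_le_right _ _)
    have hεS : ∀ i, d i ≠ -(m/2) → ε < d i + m/2 := by
      intro i hi
      have h1 : ε ≤ ε₁ := le_trans (min_le_left _ _) (min_le_left _ _)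
      have h2 : ε₁ ≤ (d i + m/2)/2 := by
        have := Finset.inf'_le (f := fun i => if d i = -(m/2) then m else (d i + m/2)/2)
          (Finset.mem_univ i)
        rwa [if_neg hi] at this
      have hlt : -(m/2) < d i := lt_of_le_of_ne (hdlb i) (Ne.symm hi)
      have : 0 < d i + m/2 := by linarith
      linarith
    have hpert : ∀ i, dd m (r i) (u + ε) = if d i = -(m/2) then m/2 - ε else d i - ε := by
      intro i
      have hdi : d i = r i - u - n i * m := hd i
      by_cases hi : d i = -(m/2)
      · rw [if_pos hi]
        have hround : round ((r i - (u + ε))/m) = n i - 1 := by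
          apply round_eq_of
          · have e : (r i - (u + ε))/m - ((n i - 1 : ℤ) : ℝ) = 1/2 - ε/m := by
              push_cast
              have hr' : r i = d i + u + n i * m := by rw [hdi]; ring
              rw [hr', hi]
              field_simp
              ring
            rw [e]
            have : ε/m ≤ 1 := (div_le_one hm).mpr hεm
            linarith
          · have e : (r i - (u + ε))/m - ((n i - 1 : ℤ) : ℝ) = 1/2 - ε/m := by
              push_cast
              have hr' : r i = d i + u + n i * m := by rw [hdi]; ring
              rw [hr', hi]
              field_simp
              ring
            rw [e]
            have : 0 < ε/m := div_pos hεpos hm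
            linarith
        unfold dd
        rw [hround]
        push_cast
        have hr' : r i = d i + u + n i * m := by rw [hdi]; ring
        rw [hr', hi]
        ring
      · rw [if_neg hi]
        have hround : round ((r i - (u + ε))/m) = n i := by
          apply round_eq_of
          · have e : (r i - (u + ε))/m - (n i : ℝ) = (d i - ε)/m := by
              rw [hdi]; field_simp; ring
            rw [e, le_div_iff₀ hm]
            have := hεS i hi
            linarith
          · have e : (r i - (u + ε))/m - (n i : ℝ) = (d i - ε)/m := by
              rw [hdi]; field_simp; ring
            rw [e, div_lt_iff₀ hm]
            have := hdub i
            linarith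
        unfold dd
        rw [hround, hdi]
        ring
    have hF : (∑ i, w i * (dd m (r i) (u + ε))^2)
        = (∑ i, w i * (d i)^2) - 2*ε*D + ε^2 - 2*m*ε*WS := by
      have h1 : ∀ i ∈ Finset.univ, w i * (dd m (r i) (u + ε))^2
          = (w i * (d i)^2 - 2*ε*(w i * d i) + ε^2 * w i)
            + (if d i = -(m/2) then (-(2*m*ε)) * w i else 0) := by
        intro i _
        rw [hpert i]
        by_cases hi : d i = -(m/2)
        · rw [if_pos hi, if_pos hi, hi]; ring
        · rw [if_neg hi, if_neg hi]; ring
      rw [Finset.sum_congr rfl h1, Finset.sum_add_distrib]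
      have h2 : (∑ i, if d i = -(m/2) then (-(2*m*ε)) * w i else 0) = (-(2*m*ε)) * WS := by
        rw [hWS_def, Finset.mul_sum, hS_def, Finset.sum_filter]
      rw [h2, Finset.sum_add_distrib, Finset.sum_sub_distrib, ← Finset.mul_sum, ← Finset.mul_sum,
        hsum, ← hD_def]
      ring
    have hle := hminR (u + ε)
    rw [hFu, hF] at hle
    have h2 : ε ≤ D + m * WS := min_le_right _ _
    nlinarith
  -- conclude stationarity
  have hWS0 : 0 ≤ WS := Finset.sum_nonneg (fun i _ => (hw i).le)
  have hWS : WS = 0 := by nlinarith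
  have hD0 : D = 0 := by nlinarith
  have hkey : u = (∑ i, w i * r i) - m * (∑ i, w i * (n i : ℝ)) := by
    have h1 : ∀ i ∈ Finset.univ, w i * d i
        = w i * r i - w i * u - m * (w i * (n i : ℝ)) := by
      intro i _
      rw [hd i]; ring
    have h2 : D = (∑ i, w i * r i) - (∑ i, w i) * u - m * (∑ i, w i * (n i : ℝ)) := by
      rw [hD_def, Finset.sum_congr rfl h1, Finset.sum_sub_distrib, Finset.sum_sub_distrib,
        ← Finset.sum_mul, ← Finset.mul_sum]
    rw [hsum] at h2
    rw [hD0] at h2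
    linarith
  -- range and characterization of n
  have htlb : ∀ i, -(1:ℝ) < (r i - u)/m := by
    intro i
    rw [lt_div_iff₀ hm]
    have := hr0 i
    linarith
  have htub : ∀ i, (r i - u)/m < 1 := by
    intro i
    rw [div_lt_iff₀ hm]
    have := hr1 i
    linarith
  have hn1 : ∀ i, n i = 1 ↔ u + m/2 ≤ r i := by
    intro i
    constructor
    · intro h
      have hb := (round_bounds ((r i - u)/m)).1
      rw [show round ((r i - u)/m) = n i from rfl, h] at hb
      push_cast at hb
      have h2 : (1:ℝ)/2 ≤ (r i - u)/m := by linarith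
      rw [le_div_iff₀ hm] at h2
      linarith
    · intro h
      apply round_eq_of (n := 1)
      · push_cast
        have : (1:ℝ)/2 * m ≤ r i - u := by linarith
        have h2 : (1:ℝ)/2 ≤ (r i - u)/m := by
          rw [le_div_iff₀ hm]; linarith
        linarith
      · push_cast
        have := htub i
        linarith
  have hn_1 : ∀ i, n i = -1 ↔ r i < u - m/2 := by
    intro i
    constructor
    · intro h
      have hb := (round_bounds ((r i - u)/m)).2
      rw [show round ((r i - u)/m) = n i from rfl, h] at hb
      push_cast at hb
      have : (r i - u)/m < -(1/2) := by linarith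
      rw [div_lt_iff₀ hm] at this
      linarith
    · intro h
      apply round_eq_of (n := -1)
      · push_cast
        have := htlb i
        linarith
      · push_cast
        have : (r i - u)/m < -(1/2) := by
          rw [div_lt_iff₀ hm]; linarith
        linarith
  have hn_range : ∀ i, n i = -1 ∨ n i = 0 ∨ n i = 1 := by
    intro i
    have hb := round_bounds ((r i - u)/m)
    have hb1 := hb.1
    have hb2 := hb.2
    rw [show round ((r i - u)/m) = n i from rfl] at hb1 hb2
    have h1 : (n i : ℝ) < 2 := by linarith [htub i]
    have h2 : (-2 : ℝ) < (n i : ℝ) := by linarith [htlb i]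
    have h1' : n i < 2 := by exact_mod_cast h1
    have h2' : -2 < n i := by exact_mod_cast h2
    omega
  -- split sum over n
  set T := Finset.univ.filter (fun i => n i = 1) with hT_def
  set N := Finset.univ.filter (fun i => n i = -1) with hN_def
  have hB : (∑ i, w i * (n i : ℝ)) = (∑ i ∈ T, w i) - (∑ i ∈ N, w i) := by
    rw [hT_def, hN_def, Finset.sum_filter, Finset.sum_filter, ← Finset.sum_sub_distrib]
    apply Finset.sum_congr rfl
    intro i _
    rcases hn_range i with h | h | h <;> rw [h] <;> norm_num
  -- full-range sum equals 1
  have hfull : (∑ i ∈ Finset.univ.filter (fun i : Fin L => (i:ℕ) < L), w (ς i)) = 1 := by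
    have h1 : Finset.univ.filter (fun i : Fin L => (i:ℕ) < L) = Finset.univ := by
      apply Finset.filter_true_of_mem
      intro i _
      exact i.isLt
    rw [h1, Equiv.sum_comp ς w, hsum]
  by_cases hT : T = ∅
  · -- no wraps upward; u = A + m * WN
    have hBN : (∑ i, w i * (n i : ℝ)) = -(∑ i ∈ N, w i) := by
      rw [hB, hT]
      simp
    have hNchar : N = Finset.univ.filter (fun i => r i < u - m/2) := by
      rw [hN_def]
      apply Finset.filter_congr
      intro i _
      simp only [hn_1 i]
    obtain ⟨hcs, -⟩ := cutoff_sum r w ς hς (u - m/2)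
    set k0 := (Finset.univ.filter (fun j => r j < u - m/2)).card with hk0_def
    have hk0L : k0 ≤ L := by
      rw [hk0_def]
      calc (Finset.univ.filter (fun j => r j < u - m/2)).card
          ≤ (Finset.univ : Finset (Fin L)).card := Finset.card_filter_le _ _
        _ = L := by rw [Finset.card_univ, Fintype.card_fin]
    have hWN : (∑ i ∈ N, w i) = ∑ i ∈ Finset.univ.filter (fun i : Fin L => (i:ℕ) < k0), w (ς i) := by
      rw [hNchar]
      exact hcs
    by_cases hk0 : 1 ≤ k0
    · refine ⟨k0, hk0, hk0L, 0, ?_⟩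
      push_cast
      rw [hkey, hBN, hWN]
      ring
    · push_neg at hk0
      have hk00 : k0 = 0 := by omega
      have hWN0 : (∑ i ∈ N, w i) = 0 := by
        rw [hWN, hk00]
        simp
      refine ⟨L, hL, le_refl L, -1, ?_⟩
      rw [hfull, hkey, hBN, hWN0]
      push_cast
      ring
  · -- some index wraps upward; then none wraps downward
    have hNe : N = ∅ := by
      obtain ⟨i0, hi0⟩ := Finset.nonempty_of_ne_empty hT
      rw [hT_def, Finset.mem_filter] at hi0
      have h1 : u + m/2 ≤ r i0 := (hn1 i0).mp hi0.2
      have h2 : u < m/2 := by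
        have := hr1 i0
        linarith
      rw [hN_def, Finset.filter_eq_empty_iff]
      intro i _
      rw [hn_1 i]
      push_neg
      have := hr0 i
      linarith
    have hBT : (∑ i, w i * (n i : ℝ)) = ∑ i ∈ T, w i := by
      rw [hB, hNe]
      simp
    have hsplit : (∑ i ∈ T, w i)
        + (∑ i ∈ Finset.univ.filter (fun i => ¬ n i = 1), w i) = 1 := by
      rw [hT_def, Finset.sum_filter_add_sum_filter_not, hsum]
    have hTcchar : Finset.univ.filter (fun i => ¬ n i = 1)
        = Finset.univ.filter (fun i => r i < u + m/2) := by
      apply Finset.filter_congr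
      intro i _
      rw [hn1 i]
      simp [not_le]
    obtain ⟨hcs, -⟩ := cutoff_sum r w ς hς (u + m/2)
    set k0 := (Finset.univ.filter (fun j => r j < u + m/2)).card with hk0_def
    have hk0L : k0 ≤ L := by
      rw [hk0_def]
      calc (Finset.univ.filter (fun j => r j < u + m/2)).card
          ≤ (Finset.univ : Finset (Fin L)).card := Finset.card_filter_le _ _
        _ = L := by rw [Finset.card_univ, Fintype.card_fin]
    have hWTc : (∑ i ∈ Finset.univ.filter (fun i => ¬ n i = 1), w i)
        = ∑ i ∈ Finset.univ.filter (fun i : Fin L => (i:ℕ) < k0), w (ς i) := by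
      rw [hTcchar]
      exact hcs
    by_cases hk0 : 1 ≤ k0
    · refine ⟨k0, hk0, hk0L, -1, ?_⟩
      rw [hkey, hBT, ← hWTc]
      have hT1 : (∑ i ∈ T, w i)
          = 1 - (∑ i ∈ Finset.univ.filter (fun i => ¬ n i = 1), w i) := by
        linarith [hsplit]
      rw [hT1]
      push_cast
      ring
    · push_neg at hk0
      have hk00 : k0 = 0 := by omega
      have hWTc0 : (∑ i ∈ Finset.univ.filter (fun i => ¬ n i = 1), w i) = 0 := by
        rw [hWTc, hk00]
        simp
      refine ⟨L, hL, le_refl L, -2, ?_⟩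
      rw [hfull, hkey, hBT]
      have hT1 : (∑ i ∈ T, w i) = 1 := by
        rw [← hsplit, hWTc0]
        ring
      rw [hT1]
      push_cast
      ring


lemma mem_FM_iff {m : ℝ} (hm : 0 < m) (z : ℂ) :
    z ∈ FM ((m : ℝ) : ℂ) ↔ 0 ≤ z.re ∧ z.re < m ∧ 0 ≤ z.im ∧ z.im < m := by
  constructor
  · rintro ⟨a, b, ha0, ha1, hb0, hb1, rfl⟩
    simp only [Complex.mul_re, Complex.mul_im, Complex.ofReal_re, Complex.ofReal_im,
      Complex.add_re, Complex.add_im, Complex.I_re, Complex.I_im]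
    norm_num
    refine ⟨by positivity, by nlinarith, by positivity, by nlinarith⟩
  · rintro ⟨h1, h2, h3, h4⟩
    refine ⟨z.re/m, z.im/m, div_nonneg h1 hm.le, (div_lt_one hm).mpr h2,
      div_nonneg h3 hm.le, (div_lt_one hm).mpr h4, ?_⟩
    apply Complex.ext <;>
      simp only [Complex.mul_re, Complex.mul_im, Complex.ofReal_re, Complex.ofReal_im,
        Complex.add_re, Complex.add_im, Complex.I_re, Complex.I_im] <;>
      field_simp <;> ring

lemma cdist_re (m : ℝ) (x z : ℂ) :
    (cdist ((m:ℝ):ℂ) x z).re = dd m x.re z.re := by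
  simp [cdist, cround, dd, Complex.div_ofReal_re]

lemma cdist_im (m : ℝ) (x z : ℂ) :
    (cdist ((m:ℝ):ℂ) x z).im = dd m x.im z.im := by
  simp [cdist, cround, dd, Complex.div_ofReal_im]

lemma cost_split (m : ℝ) (x z : ℂ) :
    ‖cdist ((m:ℝ):ℂ) x z‖^2 = (dd m x.re z.re)^2 + (dd m x.im z.im)^2 := by
  rw [Complex.sq_norm, Complex.normSq_apply, ← cdist_re m x z, ← cdist_im m x z]
  ring

lemma cmod_re (m : ℝ) (E : ℂ) : (cmod E ((m:ℝ):ℂ)).re = E.re - m * ⌊E.re/m⌋ := by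
  simp [cmod, cfloor, Complex.div_ofReal_re]

lemma cmod_im (m : ℝ) (E : ℂ) : (cmod E ((m:ℝ):ℂ)).im = E.im - m * ⌊E.im/m⌋ := by
  simp [cmod, cfloor, Complex.div_ofReal_im]

lemma rmod_eq {m u t : ℝ} (hm : 0 < m) (j : ℤ) (h0 : 0 ≤ u) (h1 : u < m)
    (ht : t = u + j*m) : t - m * ⌊t/m⌋ = u := by
  have h2 : t/m = u/m + j := by rw [ht]; field_simp
  have h3 : ⌊u/m⌋ = 0 := by
    rw [Int.floor_eq_zero_iff]
    constructor
    · positivity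
    · rw [div_lt_one hm]; exact h1
  rw [h2, Int.floor_add_intCast, h3]
  push_cast
  rw [ht]; ring

/-- Structure of the optimal common-remainder estimate: any minimizer of the
weighted circular-distance cost over `F_M` has the form
`⟨Σ wᵢr̃ᵢ + M(Σ_{i≤k₁} w_{ς(i)} + i·Σ_{i≤k₂} w_{υ(i)})⟩_M`. -/
theorem stmt14 (L : ℕ) (M : ℤ) (hM : 0 < M)
    (rt : Fin L → ℂ) (hrt : ∀ i, rt i ∈ FM (M : ℂ))
    (w : Fin L → ℝ) (hw : ∀ i, 0 < w i) (hsum : ∑ i, w i = 1)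
    (ς υ : Equiv.Perm (Fin L))
    (hς : ∀ i j : Fin L, i ≤ j → (rt (ς i)).re ≤ (rt (ς j)).re)
    (hυ : ∀ i j : Fin L, i ≤ j → (rt (υ i)).im ≤ (rt (υ j)).im)
    (rchat : ℂ) (hrcF : rchat ∈ FM (M : ℂ))
    (hmin : ∀ x ∈ FM (M : ℂ),
      (∑ i, w i * ‖cdist (M : ℂ) (rt i) rchat‖ ^ 2) ≤
      (∑ i, w i * ‖cdist (M : ℂ) (rt i) x‖ ^ 2)) :
    ∃ k₁ k₂ : ℕ, 1 ≤ k₁ ∧ k₁ ≤ L ∧ 1 ≤ k₂ ∧ k₂ ≤ L ∧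
      rchat = cmod ((∑ i, (w i : ℂ) * rt i) +
        (M : ℂ) * ((∑ i ∈ Finset.univ.filter (fun i : Fin L => (i : ℕ) < k₁), (w (ς i) : ℂ)) +
          Complex.I * ∑ i ∈ Finset.univ.filter (fun i : Fin L => (i : ℕ) < k₂), (w (υ i) : ℂ)))
        (M : ℂ) := by
  classical
  set mr : ℝ := (M : ℝ) with hmr_def
  have hmr : 0 < mr := by rw [hmr_def]; exact_mod_cast hM
  have hMc : ((M:ℤ) : ℂ) = ((mr : ℝ) : ℂ) := by rw [hmr_def]; push_cast; ring
  rw [hMc] at hrt hrcF hmin ⊢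
  obtain ⟨hc1, hc2, hc3, hc4⟩ := (mem_FM_iff hmr rchat).mp hrcF
  have hrtb : ∀ i, 0 ≤ (rt i).re ∧ (rt i).re < mr ∧ 0 ≤ (rt i).im ∧ (rt i).im < mr :=
    fun i => (mem_FM_iff hmr (rt i)).mp (hrt i)
  have hsplitsum : ∀ y : ℂ, (∑ i, w i * ‖cdist ((mr:ℝ):ℂ) (rt i) y‖^2)
      = (∑ i, w i * (dd mr (rt i).re y.re)^2) + (∑ i, w i * (dd mr (rt i).im y.im)^2) := by
    intro y
    rw [← Finset.sum_add_distrib]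
    apply Finset.sum_congr rfl
    intro i _
    rw [cost_split]
    ring
  have hmin1 : ∀ x, 0 ≤ x → x < mr →
      (∑ i, w i * (dd mr (rt i).re rchat.re)^2) ≤ ∑ i, w i * (dd mr (rt i).re x)^2 := by
    intro x hx0 hx1
    have hz : ((x:ℂ) + (rchat.im : ℂ) * Complex.I) ∈ FM ((mr:ℝ):ℂ) := by
      rw [mem_FM_iff hmr]
      simp only [Complex.add_re, Complex.add_im, Complex.mul_re, Complex.mul_im,
        Complex.ofReal_re, Complex.ofReal_im, Complex.I_re, Complex.I_im]
      norm_num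
      exact ⟨hx0, hx1, hc3, hc4⟩
    have h := hmin _ hz
    rw [hsplitsum, hsplitsum] at h
    have hre : ((x:ℂ) + (rchat.im : ℂ) * Complex.I).re = x := by simp
    have him : ((x:ℂ) + (rchat.im : ℂ) * Complex.I).im = rchat.im := by simp
    rw [hre, him] at h
    linarith
  have hmin2 : ∀ x, 0 ≤ x → x < mr →
      (∑ i, w i * (dd mr (rt i).im rchat.im)^2) ≤ ∑ i, w i * (dd mr (rt i).im x)^2 := by
    intro x hx0 hx1
    have hz : ((rchat.re:ℂ) + (x : ℂ) * Complex.I) ∈ FM ((mr:ℝ):ℂ) := by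
      rw [mem_FM_iff hmr]
      simp only [Complex.add_re, Complex.add_im, Complex.mul_re, Complex.mul_im,
        Complex.ofReal_re, Complex.ofReal_im, Complex.I_re, Complex.I_im]
      norm_num
      exact ⟨hc1, hc2, hx0, hx1⟩
    have h := hmin _ hz
    rw [hsplitsum, hsplitsum] at h
    have hre : ((rchat.re:ℂ) + (x : ℂ) * Complex.I).re = rchat.re := by simp
    have him : ((rchat.re:ℂ) + (x : ℂ) * Complex.I).im = x := by simp
    rw [hre, him] at h
    linarith
  obtain ⟨k₁, hk₁a, hk₁b, j₁, he1⟩ := oneD mr hmr (fun i => (rt i).re)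
    (fun i => (hrtb i).1) (fun i => (hrtb i).2.1) w hw hsum ς hς rchat.re hc1 hc2 hmin1
  obtain ⟨k₂, hk₂a, hk₂b, j₂, he2⟩ := oneD mr hmr (fun i => (rt i).im)
    (fun i => (hrtb i).2.2.1) (fun i => (hrtb i).2.2.2) w hw hsum υ hυ rchat.im hc3 hc4 hmin2
  refine ⟨k₁, k₂, hk₁a, hk₁b, hk₂a, hk₂b, ?_⟩
  set S1 := ∑ i ∈ Finset.univ.filter (fun i : Fin L => (i:ℕ) < k₁), w (ς i) with hS1
  set S2 := ∑ i ∈ Finset.univ.filter (fun i : Fin L => (i:ℕ) < k₂), w (υ i) with hS2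
  have hcast1 : (∑ i ∈ Finset.univ.filter (fun i : Fin L => (i:ℕ) < k₁), ((w (ς i) : ℝ):ℂ))
      = ((S1:ℝ):ℂ) := by rw [hS1]; push_cast; rfl
  have hcast2 : (∑ i ∈ Finset.univ.filter (fun i : Fin L => (i:ℕ) < k₂), ((w (υ i) : ℝ):ℂ))
      = ((S2:ℝ):ℂ) := by rw [hS2]; push_cast; rfl
  rw [hcast1, hcast2]
  set E : ℂ := (∑ i, ((w i : ℝ) : ℂ) * rt i)
    + ((mr:ℝ):ℂ) * (((S1:ℝ):ℂ) + Complex.I * ((S2:ℝ):ℂ)) with hE_def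
  have hEre : E.re = (∑ i, w i * (rt i).re) + mr * S1 := by
    rw [hE_def]
    simp [Complex.re_sum]
  have hEim : E.im = (∑ i, w i * (rt i).im) + mr * S2 := by
    rw [hE_def]
    simp [Complex.im_sum]
  apply Complex.ext
  · rw [cmod_re, hEre]
    have ht : (∑ i, w i * (rt i).re) + mr * S1 = rchat.re + ((-j₁ : ℤ) : ℝ) * mr := by
      push_cast
      linarith [he1]
    exact (rmod_eq hmr (-j₁) hc1 hc2 ht).symm
  · rw [cmod_im, hEim]
    have ht : (∑ i, w i * (rt i).im) + mr * S2 = rchat.im + ((-j₂ : ℤ) : ℝ) * mr := by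
      push_cast
      linarith [he2]
    exact (rmod_eq hmr (-j₂) hc3 hc4 ht).symm
end
end
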